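/- arXiv:2403.17193 — 5 statements merged into one kernel-verified Lean document; each statement's English description precedes it below -/
import Mathlib

section
/- Every nonzero 2-dimensional commutative associative algebra over ℂ is isomorphic to exactly one of the following algebras, given by a multiplication table on a basis e1, e2: A01: e1·e1 = e1, e2·e2 = e2; A02: e1·e1 = e1, e1·e2 = e2; A03: e1·e1 = e1; A04: e1·e1 = e2. In particular these four algebras are pairwise non-isomorphic. -/
noncomputable section

/-- The 2-dimensional complex vector space. -/
abbrev V2 : Type := Fin 2 → ℂ

/-- The bilinear multiplication on `V2` determined by a table of structure constants:
`c i j` is the product of the `i`-th and `j`-th basis vectors. -/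
def tm (c : Fin 2 → Fin 2 → V2) : V2 → V2 → V2 :=
  fun x y => ∑ i, ∑ j, (x i * y j) • c i j

/-- Multiplication table with the given values of `e1*e1`, `e1*e2`, `e2*e1`, `e2*e2`. -/
def tbl (a b c d : V2) : Fin 2 → Fin 2 → V2 := ![![a, b], ![c, d]]

/-- The zero multiplication on `V2`. -/
def zm : V2 → V2 → V2 := fun _ _ => 0

/-- Isomorphism of algebras with one multiplication: a ℂ-linear bijection preserving
the multiplication. -/
def Iso1 {A : Type*} [AddCommGroup A] [Module ℂ A] {B : Type*} [AddCommGroup B]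
    [Module ℂ B] (μ : A → A → A) (ν : B → B → B) : Prop :=
  ∃ φ : A ≃ₗ[ℂ] B, ∀ x y, φ (μ x y) = ν (φ x) (φ y)

/-- Isomorphism of algebras with two multiplications: a ℂ-linear bijection preserving
both multiplications. -/
def Iso2 {A : Type*} [AddCommGroup A] [Module ℂ A] {B : Type*} [AddCommGroup B]
    [Module ℂ B] (μ₁ μ₂ : A → A → A) (ν₁ ν₂ : B → B → B) : Prop :=
  ∃ φ : A ≃ₗ[ℂ] B,
    (∀ x y, φ (μ₁ x y) = ν₁ (φ x) (φ y)) ∧ (∀ x y, φ (μ₂ x y) = ν₂ (φ x) (φ y))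

/-- The commutative associative algebra A01: `e1·e1 = e1`, `e2·e2 = e2`. -/
def cA01 : Fin 2 → Fin 2 → V2 := tbl ![1,0] 0 0 ![0,1]

/-- The commutative associative algebra A02: `e1·e1 = e1`, `e1·e2 = e2·e1 = e2`. -/
def cA02 : Fin 2 → Fin 2 → V2 := tbl ![1,0] ![0,1] ![0,1] 0

/-- The commutative associative algebra A03: `e1·e1 = e1`. -/
def cA03 : Fin 2 → Fin 2 → V2 := tbl ![1,0] 0 0 0

/-- The commutative associative algebra A04: `e1·e1 = e2`. -/
def cA04 : Fin 2 → Fin 2 → V2 := tbl ![0,1] 0 0 0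

/-- The four commutative associative multiplication tables A01–A04. -/
def commAlg : Fin 4 → Fin 2 → Fin 2 → V2 := ![cA01, cA02, cA03, cA04]

/-!
If some `x` has `x, x²` linearly independent, they form a basis and `x³ = (r + s) x² - r s x` for
suitable `r, s`, so the algebra is `t ℂ[t] / (t (t - r) (t - s))`. For distinct nonzero `r, s`
the Lagrange polynomials `t (t - s) / (r (r - s))` and `t (t - r) / (s (s - r))` are orthogonal
idempotents (A01); for `r = s ≠ 0` there is a unit and the square-zero element `(x² - r x) / r`
(A02); for `s = 0 ≠ r` the idempotent `x² / r²` annihilates `x - x² / r` (A03); and for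
`r = s = 0` we have `x³ = 0` (A04).
Otherwise every square `x²` lies on the line through `x`; comparing this on `u + v` and `u - v`
for a basis `u, v`, associativity forces all products to vanish.
The four algebras are told apart by the existence of a nonzero element annihilating everything, of
a nonzero square-zero element and of a nonzero idempotent.
-/

open Module

lemma tm_cA01 (x y : V2) : tm cA01 x y = ![x 0 * y 0, x 1 * y 1] := by
  ext k; fin_cases k <;> simp [tm, Fin.sum_univ_two, cA01, tbl]

lemma tm_cA02 (x y : V2) : tm cA02 x y = ![x 0 * y 0, x 0 * y 1 + x 1 * y 0] := by
  ext k; fin_cases k <;> simp [tm, Fin.sum_univ_two, cA02, tbl]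

lemma tm_cA03 (x y : V2) : tm cA03 x y = ![x 0 * y 0, 0] := by
  ext k; fin_cases k <;> simp [tm, Fin.sum_univ_two, cA03, tbl]

lemma tm_cA04 (x y : V2) : tm cA04 x y = ![0, x 0 * y 0] := by
  ext k; fin_cases k <;> simp [tm, Fin.sum_univ_two, cA04, tbl]

section Invariants

variable {A B : Type*} [AddCommGroup A] [Module ℂ A] [AddCommGroup B] [Module ℂ B]

def HasNontrivialAnnihilator (μ : A → A → A) : Prop := ∃ z ≠ 0, ∀ y, μ z y = 0

def HasNonzeroSquareZero (μ : A → A → A) : Prop := ∃ z ≠ 0, μ z z = 0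

def HasNonzeroIdempotent (μ : A → A → A) : Prop := ∃ z ≠ 0, μ z z = z

variable {μ : A → A → A} {ν : B → B → B}

lemma Iso1.symm (h : Iso1 μ ν) : Iso1 ν μ := by
  obtain ⟨φ, hφ⟩ := h
  exact ⟨φ.symm, fun x y => φ.injective (by simp [hφ])⟩

lemma Iso1.hasNontrivialAnnihilator (h : Iso1 μ ν) (hμ : HasNontrivialAnnihilator μ) :
    HasNontrivialAnnihilator ν := by
  obtain ⟨φ, hφ⟩ := h
  obtain ⟨z, hz, hzy⟩ := hμ
  exact ⟨φ z, by simpa using hz, fun y => by simpa [hzy] using (hφ z (φ.symm y)).symm⟩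

lemma Iso1.hasNonzeroSquareZero (h : Iso1 μ ν) (hμ : HasNonzeroSquareZero μ) :
    HasNonzeroSquareZero ν := by
  obtain ⟨φ, hφ⟩ := h
  obtain ⟨z, hz, hzz⟩ := hμ
  exact ⟨φ z, by simpa using hz, by rw [← hφ, hzz, map_zero]⟩

lemma Iso1.hasNonzeroIdempotent (h : Iso1 μ ν) (hμ : HasNonzeroIdempotent μ) :
    HasNonzeroIdempotent ν := by
  obtain ⟨φ, hφ⟩ := h
  obtain ⟨z, hz, hzz⟩ := hμ
  exact ⟨φ z, by simpa using hz, by rw [← hφ, hzz]⟩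

end Invariants

lemma hasNontrivialAnnihilator_commAlg_iff (i : Fin 4) :
    HasNontrivialAnnihilator (tm (commAlg i)) ↔ 2 ≤ i := by
  fin_cases i <;> simp only [commAlg, HasNontrivialAnnihilator, Fin.reduceFinMk, Fin.isValue,
    Matrix.cons_val]
  · refine iff_of_false (fun ⟨z, hz, h⟩ => hz ?_) (by decide)
    simpa [tm_cA01, funext_iff, Fin.forall_fin_two] using h z
  · refine iff_of_false (fun ⟨z, hz, h⟩ => hz ?_) (by decide)
    simpa [tm_cA02, funext_iff, Fin.forall_fin_two] using h ![1, 0]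
  · exact iff_of_true ⟨![0, 1], by simp, fun y => by simp [tm_cA03]⟩ (by decide)
  · exact iff_of_true ⟨![0, 1], by simp, fun y => by simp [tm_cA04]⟩ (by decide)

lemma hasNonzeroSquareZero_commAlg_iff (i : Fin 4) :
    HasNonzeroSquareZero (tm (commAlg i)) ↔ i ≠ 0 := by
  fin_cases i <;> simp only [commAlg, HasNonzeroSquareZero, Fin.reduceFinMk, Fin.isValue,
    Matrix.cons_val]
  · refine iff_of_false (fun ⟨z, hz, h⟩ => hz ?_) (by decide)
    simpa [tm_cA01, funext_iff, Fin.forall_fin_two] using h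
  · exact iff_of_true ⟨![0, 1], by simp, by simp [tm_cA02]⟩ (by decide)
  · exact iff_of_true ⟨![0, 1], by simp, by simp [tm_cA03]⟩ (by decide)
  · exact iff_of_true ⟨![0, 1], by simp, by simp [tm_cA04]⟩ (by decide)

lemma hasNonzeroIdempotent_commAlg_iff (i : Fin 4) :
    HasNonzeroIdempotent (tm (commAlg i)) ↔ i ≠ 3 := by
  fin_cases i <;> simp only [commAlg, HasNonzeroIdempotent, Fin.reduceFinMk, Fin.isValue,
    Matrix.cons_val]
  · exact iff_of_true ⟨![1, 0], by simp, by simp [tm_cA01]⟩ (by decide)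
  · exact iff_of_true ⟨![1, 0], by simp, by simp [tm_cA02]⟩ (by decide)
  · exact iff_of_true ⟨![1, 0], by simp, by simp [tm_cA03]⟩ (by decide)
  · refine iff_of_false (fun ⟨z, hz, h⟩ => hz ?_) (by decide)
    simp only [tm_cA04, funext_iff, Fin.forall_fin_two, Matrix.cons_val_zero,
      Matrix.cons_val_one] at h
    simp [funext_iff, Fin.forall_fin_two, ← h.1, ← h.2]

lemma eq_of_iso_commAlg {i j : Fin 4} (h : Iso1 (tm (commAlg i)) (tm (commAlg j))) : i = j := by
  have hann : 2 ≤ i ↔ 2 ≤ j := by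
    rw [← hasNontrivialAnnihilator_commAlg_iff, ← hasNontrivialAnnihilator_commAlg_iff]
    exact ⟨h.hasNontrivialAnnihilator, h.symm.hasNontrivialAnnihilator⟩
  have hsq : i ≠ 0 ↔ j ≠ 0 := by
    rw [← hasNonzeroSquareZero_commAlg_iff, ← hasNonzeroSquareZero_commAlg_iff]
    exact ⟨h.hasNonzeroSquareZero, h.symm.hasNonzeroSquareZero⟩
  have hidem : i ≠ 3 ↔ j ≠ 3 := by
    rw [← hasNonzeroIdempotent_commAlg_iff, ← hasNonzeroIdempotent_commAlg_iff]
    exact ⟨h.hasNonzeroIdempotent, h.symm.hasNonzeroIdempotent⟩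
  revert hann hsq hidem
  clear h
  revert i j
  decide

section IsoOfBasis

variable {A : Type*} [AddCommGroup A] [Module ℂ A] (mul : A →ₗ[ℂ] A →ₗ[ℂ] A)

lemma iso_tm_of_basis (b : Basis (Fin 2) ℂ A) (c : Fin 2 → Fin 2 → V2)
    (h : ∀ i j, mul (b i) (b j) = b.equivFun.symm (c i j)) :
    Iso1 (fun x y => mul x y) (tm c) := by
  have hsymm : ∀ u v,
      b.equivFun.symm (tm c u v) = mul (b.equivFun.symm u) (b.equivFun.symm v) := by
    intro u v
    simp only [tm, map_sum, map_smul, h, Basis.equivFun_symm_apply, LinearMap.sum_apply,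
      LinearMap.smul_apply, Finset.smul_sum, smul_smul]
    rw [Finset.sum_comm]
    congr! 4 with j _ i _ k _
    ring
  refine ⟨b.equivFun, fun x y => b.equivFun.symm.injective ?_⟩
  simp [hsymm]

lemma iso_tbl_of_linearIndependent (hdim : finrank ℂ A = 2)
    (hcomm : ∀ x y : A, mul x y = mul y x) {e f : A} (hli : LinearIndependent ℂ ![e, f])
    (a c d : V2) (hee : mul e e = a 0 • e + a 1 • f) (hef : mul e f = c 0 • e + c 1 • f)
    (hff : mul f f = d 0 • e + d 1 • f) :
    Iso1 (fun x y => mul x y) (tm (tbl a c c d)) := by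
  let b := basisOfLinearIndependentOfCardEqFinrank hli (by simp [hdim])
  have hb : ⇑b = ![e, f] := coe_basisOfLinearIndependentOfCardEqFinrank hli _
  refine iso_tm_of_basis mul b _ fun i j => ?_
  fin_cases i <;> fin_cases j <;>
    simp [hb, Basis.equivFun_symm_apply, Fin.sum_univ_two, tbl, hee, hef, hff, hcomm f e]

end IsoOfBasis

lemma exists_add_eq_and_mul_eq {K : Type*} [Field K] [NeZero (2 : K)] [IsAlgClosed K] (b c : K) :
    ∃ r s : K, r + s = b ∧ r * s = c := by
  obtain ⟨r, hr⟩ := exists_quadratic_eq_zero (a := 1) (b := -b) (c := c) one_ne_zero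
    (IsAlgClosed.exists_eq_mul_self _)
  exact ⟨r, b - r, by ring, by linear_combination -hr⟩

lemma mul_smul_add_smul_of_cube_eq {K A : Type*} [CommRing K] [AddCommGroup A] [Module K A]
    (mul : A →ₗ[K] A →ₗ[K] A) (hcomm : ∀ x y : A, mul x y = mul y x)
    (hassoc : ∀ x y z : A, mul (mul x y) z = mul x (mul y z)) {x : A} {c d : K}
    (hx3 : mul x (mul x x) = c • mul x x + d • x) (p q p' q' : K) :
    mul (p • x + q • mul x x) (p' • x + q' • mul x x) =
      ((p * q' + q * p') * d + q * q' * c * d) • x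
        + (p * p' + (p * q' + q * p') * c + q * q' * (c ^ 2 + d)) • mul x x := by
  have hx4 : mul (mul x x) (mul x x) = (c * d) • x + (c ^ 2 + d) • mul x x := by
    rw [hassoc, hx3, map_add, map_smul, map_smul, hx3]
    module
  simp only [map_add, map_smul, LinearMap.add_apply, LinearMap.smul_apply, hcomm (mul x x) x,
    hx3, hx4]
  module

section PowerBasis

variable {A : Type*} [AddCommGroup A] [Module ℂ A] {mul : A →ₗ[ℂ] A →ₗ[ℂ] A}
  (hdim : finrank ℂ A = 2) (hcomm : ∀ x y : A, mul x y = mul y x)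
  (hassoc : ∀ x y z : A, mul (mul x y) z = mul x (mul y z))
  {x : A} (hli : LinearIndependent ℂ ![x, mul x x])
include hdim hcomm hassoc hli

lemma iso_cA04_of_cube_eq_zero (hx3 : mul x (mul x x) = 0) :
    Iso1 (fun a b => mul a b) (tm cA04) :=
  iso_tbl_of_linearIndependent mul hdim hcomm hli _ _ _ (by simp) (by simp [hx3])
    (by simp [hassoc, hx3])

lemma iso_cA03_of_cube_eq {r : ℂ} (hr : r ≠ 0) (hx3 : mul x (mul x x) = r • mul x x) :
    Iso1 (fun a b => mul a b) (tm cA03) := by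
  have hx3' : mul x (mul x x) = r • mul x x + (0 : ℂ) • x := by simp [hx3]
  have hmul := mul_smul_add_smul_of_cube_eq mul hcomm hassoc hx3'
  refine iso_tbl_of_linearIndependent (e := (0 : ℂ) • x + (r ^ 2)⁻¹ • mul x x)
    (f := (1 : ℂ) • x + (-r⁻¹) • mul x x) mul hdim hcomm ?_ _ _ _ ?_ ?_ ?_
  · rw [LinearIndependent.pair_add_smul_add_smul_iff]
    exact ⟨hli, by simpa using (pow_ne_zero 2 hr).symm⟩
  all_goals
    simp only [hmul, Matrix.cons_val_zero, Matrix.cons_val_one, Pi.zero_apply]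
    match_scalars <;> field_simp <;> ring

lemma iso_cA02_of_cube_eq {r : ℂ} (hr : r ≠ 0)
    (hx3 : mul x (mul x x) = (2 * r) • mul x x + (-r ^ 2) • x) :
    Iso1 (fun a b => mul a b) (tm cA02) := by
  have hmul := mul_smul_add_smul_of_cube_eq mul hcomm hassoc hx3
  refine iso_tbl_of_linearIndependent (e := (2 / r) • x + (-1 / r ^ 2) • mul x x)
    (f := (-1 : ℂ) • x + r⁻¹ • mul x x) mul hdim hcomm ?_ _ _ _ ?_ ?_ ?_
  · rw [LinearIndependent.pair_add_smul_add_smul_iff]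
    refine ⟨hli, fun h => ?_⟩
    field_simp at h
    norm_num at h
  all_goals
    simp only [hmul, Matrix.cons_val_zero, Matrix.cons_val_one, Pi.zero_apply]
    match_scalars <;> field_simp <;> ring

lemma iso_cA01_of_cube_eq {r s : ℂ} (hr : r ≠ 0) (hs : s ≠ 0) (hrs : r ≠ s)
    (hx3 : mul x (mul x x) = (r + s) • mul x x + (-(r * s)) • x) :
    Iso1 (fun a b => mul a b) (tm cA01) := by
  have hmul := mul_smul_add_smul_of_cube_eq mul hcomm hassoc hx3
  refine iso_tbl_of_linearIndependent
    (e := (-s / (r * (r - s))) • x + (r * (r - s))⁻¹ • mul x x)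
    (f := (-r / (s * (s - r))) • x + (s * (s - r))⁻¹ • mul x x)
    mul hdim hcomm ?_ _ _ _ ?_ ?_ ?_
  · rw [LinearIndependent.pair_add_smul_add_smul_iff]
    refine ⟨hli, fun h => ?_⟩
    field_simp at h
    exact hrs (neg_injective h).symm
  all_goals
    simp only [hmul, Matrix.cons_val_zero, Matrix.cons_val_one, Pi.zero_apply]
    match_scalars <;> field_simp <;> ring

lemma exists_iso_commAlg_of_linearIndependent :
    ∃ i : Fin 4, Iso1 (fun a b => mul a b) (tm (commAlg i)) := by
  have hspan : mul x (mul x x) ∈ Submodule.span ℂ {x, mul x x} := by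
    rw [← Matrix.range_cons_cons_empty, hli.span_eq_top_of_card_eq_finrank (by simp [hdim])]
    trivial
  obtain ⟨δ, β, hx3⟩ := Submodule.mem_span_pair.mp hspan
  obtain ⟨r, s, hsum, hprod⟩ := exists_add_eq_and_mul_eq β (-δ)
  replace hx3 : mul x (mul x x) = (r + s) • mul x x + (-(r * s)) • x := by
    rw [← hx3, hsum, hprod, neg_neg, add_comm]
  rcases eq_or_ne r 0 with rfl | hr <;> rcases eq_or_ne s 0 with rfl | hs
  · exact ⟨3, iso_cA04_of_cube_eq_zero hdim hcomm hassoc hli (by simpa using hx3)⟩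
  · exact ⟨2, iso_cA03_of_cube_eq hdim hcomm hassoc hli hs (by simpa using hx3)⟩
  · exact ⟨2, iso_cA03_of_cube_eq hdim hcomm hassoc hli hr (by simpa using hx3)⟩
  rcases eq_or_ne r s with rfl | hrs
  · exact ⟨1, iso_cA02_of_cube_eq hdim hcomm hassoc hli hr (by rw [hx3]; ring_nf)⟩
  · exact ⟨0, iso_cA01_of_cube_eq hdim hcomm hassoc hli hr hs hrs hx3⟩

end PowerBasis

section SquaresOnLines

variable {K A : Type*} [Field K] [AddCommGroup A] [Module K A]
  {mul : A →ₗ[K] A →ₗ[K] A}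

lemma exists_mul_self_eq_smul_of_forall_not_linearIndependent
    (h : ∀ x, ¬ LinearIndependent K ![x, mul x x]) (x : A) : ∃ c : K, mul x x = c • x := by
  rcases eq_or_ne x 0 with rfl | hx
  · exact ⟨0, by simp⟩
  have hdep := h x
  rw [LinearIndependent.pair_iff' hx, not_forall] at hdep
  obtain ⟨c, hc⟩ := hdep
  exact ⟨c, (not_not.mp hc).symm⟩

lemma eq_two_mul_of_forall_mul_self_eq_smul [NeZero (2 : K)]
    (hcomm : ∀ x y : A, mul x y = mul y x)
    (hsq : ∀ x, ∃ c : K, mul x x = c • x) {u v : A} (hli : LinearIndependent K ![u, v])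
    {a e c d : K} (hu : mul u u = a • u) (hv : mul v v = e • v)
    (huv : mul u v = c • u + d • v) : a = 2 * d ∧ e = 2 * c := by
  obtain ⟨l, hl⟩ := hsq (u + v)
  obtain ⟨m, hm⟩ := hsq (u - v)
  simp only [map_add, map_sub, LinearMap.add_apply, LinearMap.sub_apply, hu, hv, huv,
    hcomm v u] at hl hm
  obtain ⟨hl0, hl1⟩ := hli.eq_of_pair (s := a + 2 * c) (t := e + 2 * d) (s' := l) (t' := l)
    (by linear_combination (norm := module) hl)
  obtain ⟨hm0, hm1⟩ := hli.eq_of_pair (s := a - 2 * c) (t := e - 2 * d) (s' := m) (t' := -m)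
    (by linear_combination (norm := module) hm)
  have ha : (2 : K) * (a - 2 * d) = 0 := by linear_combination hl0 - hl1 + hm0 + hm1
  have he : (2 : K) * (e - 2 * c) = 0 := by linear_combination hl1 - hl0 + hm0 + hm1
  exact ⟨by linear_combination (mul_eq_zero.mp ha).resolve_left two_ne_zero,
    by linear_combination (mul_eq_zero.mp he).resolve_left two_ne_zero⟩

lemma eq_zero_of_forall_not_linearIndependent_sq [NeZero (2 : K)] (hdim : finrank K A = 2)
    (hcomm : ∀ x y : A, mul x y = mul y x)
    (hassoc : ∀ x y z : A, mul (mul x y) z = mul x (mul y z))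
    (h : ∀ x, ¬ LinearIndependent K ![x, mul x x]) : mul = 0 := by
  have hsq := exists_mul_self_eq_smul_of_forall_not_linearIndependent h
  have : Module.Finite K A := Module.finite_of_finrank_eq_succ hdim
  let b := finBasisOfFinrankEq K A hdim
  have hli : LinearIndependent K ![b 0, b 1] := by
    convert b.linearIndependent
    ext i; fin_cases i <;> rfl
  obtain ⟨a, hu⟩ := hsq (b 0)
  obtain ⟨e, hv⟩ := hsq (b 1)
  obtain ⟨c, d, huv⟩ : ∃ c d : K, mul (b 0) (b 1) = c • b 0 + d • b 1 :=
    ⟨b.repr (mul (b 0) (b 1)) 0, b.repr (mul (b 0) (b 1)) 1, by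
      rw [← Fin.sum_univ_two (fun i => b.repr (mul (b 0) (b 1)) i • b i), b.sum_repr]⟩
  have hvu : mul (b 1) (b 0) = c • b 0 + d • b 1 := hcomm (b 1) (b 0) ▸ huv
  obtain ⟨ha, he⟩ := eq_two_mul_of_forall_mul_self_eq_smul hcomm hsq hli hu hv huv
  have huuv := hassoc (b 0) (b 0) (b 1)
  have hvvu := hassoc (b 1) (b 1) (b 0)
  simp only [map_add, map_smul, LinearMap.smul_apply, hu, hv, huv, hvu] at huuv hvvu
  obtain ⟨-, huuv1⟩ := hli.eq_of_pair (s := a * c) (t := a * d) (s' := c * a + d * c)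
    (t' := d * d) (by linear_combination (norm := module) huuv)
  obtain ⟨hvvu0, -⟩ := hli.eq_of_pair (s := e * c) (t := e * d) (s' := c * c)
    (t' := c * d + d * e) (by linear_combination (norm := module) hvvu)
  have hd : d = 0 := mul_self_eq_zero.mp (by linear_combination huuv1 - d * ha)
  have hc : c = 0 := mul_self_eq_zero.mp (by linear_combination hvvu0 - c * he)
  refine b.ext fun i => b.ext fun j => ?_
  fin_cases i <;> fin_cases j <;> simp [hu, hv, huv, hvu, ha, he, hc, hd]

end SquaresOnLines

/-- Every nonzero 2-dimensional commutative associative algebra over ℂ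
is isomorphic to exactly one of A01, A02, A03, A04; in particular these four algebras
are pairwise non-isomorphic. -/
theorem statement1 (A : Type*) [AddCommGroup A] [Module ℂ A]
    (hdim : Module.finrank ℂ A = 2)
    (mul : A →ₗ[ℂ] A →ₗ[ℂ] A)
    (hcomm : ∀ x y : A, mul x y = mul y x)
    (hassoc : ∀ x y z : A, mul (mul x y) z = mul x (mul y z))
    (hnz : ∃ x y : A, mul x y ≠ 0) :
    (∃ i : Fin 4, Iso1 (fun x y => mul x y) (tm (commAlg i))) ∧
    (∀ i j : Fin 4, Iso1 (tm (commAlg i)) (tm (commAlg j)) → i = j) := by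
  refine ⟨?_, fun i j => eq_of_iso_commAlg⟩
  by_cases hex : ∃ x, LinearIndependent ℂ ![x, mul x x]
  · obtain ⟨x, hli⟩ := hex
    exact exists_iso_commAlg_of_linearIndependent hdim hcomm hassoc hli
  · obtain ⟨x, y, hxy⟩ := hnz
    have hzero := eq_zero_of_forall_not_linearIndependent_sq hdim hcomm hassoc (not_exists.mp hex)
    exact absurd (by simp [hzero]) hxy
end
end

section
/- Let A be the 2-dimensional commutative associative ℂ-algebra with basis e1, e2 and multiplication e1·e1 = e2, all other products of basis elements being zero. A ℂ-linear bijection φ : A → A is an algebra automorphism of A if and only if there exist ξ ∈ ℂ with ξ ≠ 0 and ν ∈ ℂ such that φ(e1) = ξ·e1 + ν·e2 and φ(e2) = ξ²·e2. -/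
noncomputable section

/-! The square of any element of `A04` is a multiple of `e2` determined by the `e1`-coordinate
alone, so a linear map `f` preserves the product exactly when `f(e2) = f(e1)₁² e2`, with `f(e1)₁`
the `e1`-coordinate of `f(e1)`. For a bijection this coordinate cannot vanish, as `f(e2) ≠ 0`. -/

local notation "e₁" => (![1,0] : V2)
local notation "e₂" => (![0,1] : V2)

lemma tm_cA04_apply (x y : V2) : tm cA04 x y = (x 0 * y 0) • e₂ := by
  simp [tm, cA04, tbl, Fin.sum_univ_two]

lemma eq_smul_e₁_add_smul_e₂ (x : V2) : x = x 0 • e₁ + x 1 • e₂ := by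
  funext i
  fin_cases i <;> simp

lemma linearMap_apply_zero_of_map_e₂ {f : V2 →ₗ[ℂ] V2} {c : ℂ} (h : f e₂ = c • e₂) (x : V2) :
    f x 0 = x 0 * f e₁ 0 := by
  conv_lhs => rw [eq_smul_e₁_add_smul_e₂ x, map_add, map_smul, map_smul, h]
  simp

theorem linearMap_map_tm_cA04_iff (f : V2 →ₗ[ℂ] V2) :
    (∀ x y : V2, f (tm cA04 x y) = tm cA04 (f x) (f y)) ↔ f e₂ = (f e₁ 0 ^ 2) • e₂ := by
  constructor
  · intro h
    simpa [tm_cA04_apply, sq] using h e₁ e₁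
  · intro h x y
    rw [tm_cA04_apply, tm_cA04_apply, map_smul, h, smul_smul,
      linearMap_apply_zero_of_map_e₂ h x, linearMap_apply_zero_of_map_e₂ h y]
    congr 1
    ring

/-- A ℂ-linear bijection `φ` of the algebra `A04` (`e1·e1 = e2`) is an
algebra automorphism iff there are `ξ ≠ 0` and `ν` with `φ(e1) = ξ e1 + ν e2` and
`φ(e2) = ξ² e2`. -/
theorem statement2 (φ : V2 ≃ₗ[ℂ] V2) :
    (∀ x y : V2, φ (tm cA04 x y) = tm cA04 (φ x) (φ y)) ↔
    (∃ ξ ν : ℂ, ξ ≠ 0 ∧ φ (![1,0] : V2) = ξ • (![1,0] : V2) + ν • (![0,1] : V2) ∧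
      φ (![0,1] : V2) = (ξ ^ 2) • (![0,1] : V2)) := by
  refine (linearMap_map_tm_cA04_iff φ.toLinearMap).trans ?_
  simp only [LinearEquiv.coe_coe]
  constructor
  · intro h
    exact ⟨φ e₁ 0, φ e₁ 1, fun h0 => by simp [h0] at h, eq_smul_e₁_add_smul_e₂ _, h⟩
  · rintro ⟨ξ, ν, -, h₁, h₂⟩
    have hξ : φ e₁ 0 = ξ := by rw [h₁]; simp
    simpa [hξ] using h₂
end
end

section
/- Every nonzero 2-dimensional Leibniz–Poisson algebra (L, ·, [−,−]) over ℂ is isomorphic to one of the following algebras, given on a basis e1, e2 (all unlisted products of basis elements, other than those forced by commutativity of ·, are zero): with · ≡ 0: L1: [e1,e1] = e2; L2: [e1,e2] = e1; L3: [e1,e2] = e2, [e2,e1] = −e2; and: L4: e1·e1 = e1, e2·e2 = e2, with [−,−] ≡ 0; L5^α (α ∈ ℂ): e1·e1 = e1, e1·e2 = e2, [e2,e1] = α·e2; L6^α (α ∈ ℂ): e1·e1 = e1, [e2,e1] = α·e2; L7^α (α ∈ ℂ): e1·e1 = e2, [e1,e1] = α·e2. -/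
noncomputable section

section Aux

variable {L : Type*} [AddCommGroup L] [Module ℂ L]

lemma zm_eq_tm : zm = tm (tbl 0 0 0 0) := by
  funext x y
  simp [zm, tm, tbl, Fin.sum_univ_two]

lemma pair_zero {u v : L} (h : LinearIndependent ℂ ![u, v]) {a b : ℂ}
    (hab : a • u + b • v = 0) : a = 0 ∧ b = 0 :=
  LinearIndependent.pair_iff.mp h a b hab

lemma pair_unique {u v : L} (h : LinearIndependent ℂ ![u, v]) {a b a' b' : ℂ}
    (hab : a • u + b • v = a' • u + b' • v) : a = a' ∧ b = b' := by
  have h2 : (a - a') • u + (b - b') • v = 0 := by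
    rw [sub_smul, sub_smul]
    rw [← sub_eq_zero] at hab
    rw [← hab]; abel
  obtain ⟨h1, h2⟩ := pair_zero h h2
  exact ⟨by linear_combination h1, by linear_combination h2⟩

lemma indep_change {u v : L} (h : LinearIndependent ℂ ![u, v]) (a b c d : ℂ)
    (hdet : a * d - b * c ≠ 0) :
    LinearIndependent ℂ ![a • u + b • v, c • u + d • v] := by
  rw [LinearIndependent.pair_iff]
  intro s t hst
  have h2 : (s * a + t * c) • u + (s * b + t * d) • v = 0 := by
    rw [add_smul, add_smul, mul_smul, mul_smul, mul_smul, mul_smul]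
    rw [← hst]; rw [smul_add, smul_add]; abel
  obtain ⟨h1, h2⟩ := pair_zero h h2
  constructor
  · have : s * (a * d - b * c) = 0 := by linear_combination d * h1 - c * h2
    rcases mul_eq_zero.mp this with hs | hz
    · exact hs
    · exact absurd hz hdet
  · have : t * (a * d - b * c) = 0 := by linear_combination a * h2 - b * h1
    rcases mul_eq_zero.mp this with hs | hz
    · exact hs
    · exact absurd hz hdet

lemma indep_change' {u v w z : L} (h : LinearIndependent ℂ ![u, v]) (a b c d : ℂ)
    (hdet : a * d - b * c ≠ 0) (hw : w = a • u + b • v) (hz : z = c • u + d • v) :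
    LinearIndependent ℂ ![w, z] := by
  rw [hw, hz]; exact indep_change h a b c d hdet

lemma exists_coords (hdim : Module.finrank ℂ L = 2) {u v : L}
    (h : LinearIndependent ℂ ![u, v]) (z : L) : ∃ p q : ℂ, z = p • u + q • v := by
  have hcard : Fintype.card (Fin 2) = Module.finrank ℂ L := by simp [hdim]
  let B := basisOfLinearIndependentOfCardEqFinrank h hcard
  have hB : ⇑B = ![u, v] := coe_basisOfLinearIndependentOfCardEqFinrank h hcard
  refine ⟨B.repr z 0, B.repr z 1, ?_⟩
  have := B.sum_repr z
  rw [Fin.sum_univ_two] at this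
  rw [hB] at this
  simp only [Matrix.cons_val_zero, Matrix.cons_val_one, Matrix.head_cons] at this
  exact this.symm

lemma exists_noncollinear (hdim : Module.finrank ℂ L = 2) (u : L) :
    ∃ y : L, ∀ c : ℂ, y ≠ c • u := by
  by_contra hc
  push_neg at hc
  have h1 : Module.finrank ℂ L ≤ 1 := by
    apply finrank_le_one u
    intro w
    obtain ⟨c, hcw⟩ := hc w
    exact ⟨c, hcw.symm⟩
  omega

end Aux

section Iso

variable {L : Type*} [AddCommGroup L] [Module ℂ L]

lemma bilin_eq_tm (hdim : Module.finrank ℂ L = 2) {f0 f1 : L}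
    (h : LinearIndependent ℂ ![f0, f1]) (m : L →ₗ[ℂ] L →ₗ[ℂ] L)
    (c : Fin 2 → Fin 2 → V2)
    (hm : ∀ i j : Fin 2, m (![f0, f1] i) (![f0, f1] j)
        = c i j 0 • f0 + c i j 1 • f1) :
    ∀ x y, (basisOfLinearIndependentOfCardEqFinrank h (by simp [hdim])).equivFun (m x y)
      = tm c ((basisOfLinearIndependentOfCardEqFinrank h (by simp [hdim])).equivFun x)
        ((basisOfLinearIndependentOfCardEqFinrank h (by simp [hdim])).equivFun y) := by
  intro x y
  set B := basisOfLinearIndependentOfCardEqFinrank h (by simp [hdim] : Fintype.card (Fin 2) = Module.finrank ℂ L) with hBdef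
  have hB : ⇑B = ![f0, f1] := coe_basisOfLinearIndependentOfCardEqFinrank h _
  have hBm : ∀ i j : Fin 2, m (B i) (B j) = c i j 0 • B 0 + c i j 1 • B 1 := by
    intro i j
    rw [hB]
    simpa using hm i j
  have hx : x = B.equivFun x 0 • B 0 + B.equivFun x 1 • B 1 := by
    have := B.sum_equivFun x
    rw [Fin.sum_univ_two] at this
    exact this.symm
  have hy : y = B.equivFun y 0 • B 0 + B.equivFun y 1 • B 1 := by
    have := B.sum_equivFun y
    rw [Fin.sum_univ_two] at this
    exact this.symm
  have hphiB : ∀ i : Fin 2, B.equivFun (B i) = fun j => if i = j then 1 else 0 := by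
    intro i
    funext j
    rw [B.equivFun_self]
  have expand : m x y =
      ∑ i : Fin 2, ∑ j : Fin 2, (B.equivFun x i * B.equivFun y j) • m (B i) (B j) := by
    conv_lhs => rw [hx, hy]
    simp only [map_add, map_smul, LinearMap.add_apply, LinearMap.smul_apply,
      Fin.sum_univ_two, smul_add, smul_smul]
    module
  rw [expand]
  simp only [map_sum, map_smul]
  show _ = ∑ i : Fin 2, ∑ j : Fin 2, _ • c i j
  refine Finset.sum_congr rfl fun i _ => Finset.sum_congr rfl fun j _ => ?_
  congr 1
  rw [hBm i j]
  rw [map_add, map_smul, map_smul, hphiB 0, hphiB 1]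
  funext k
  fin_cases k <;> simp

lemma iso2_of_basis (hdim : Module.finrank ℂ L = 2)
    (mul br : L →ₗ[ℂ] L →ₗ[ℂ] L) {f0 f1 : L}
    (h : LinearIndependent ℂ ![f0, f1]) (c d : Fin 2 → Fin 2 → V2)
    (hm : ∀ i j : Fin 2, mul (![f0, f1] i) (![f0, f1] j) = c i j 0 • f0 + c i j 1 • f1)
    (hb : ∀ i j : Fin 2, br (![f0, f1] i) (![f0, f1] j) = d i j 0 • f0 + d i j 1 • f1) :
    Iso2 (fun x y => mul x y) (fun x y => br x y) (tm c) (tm d) := by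
  refine ⟨(basisOfLinearIndependentOfCardEqFinrank h (by simp [hdim])).equivFun,
    fun x y => ?_, fun x y => ?_⟩
  · exact bilin_eq_tm hdim h mul c hm x y
  · exact bilin_eq_tm hdim h br d hb x y

end Iso

section Brackets

variable {L : Type*} [AddCommGroup L] [Module ℂ L]
variable (mul br : L →ₗ[ℂ] L →ₗ[ℂ] L)

/-- Bracket vanishes on an A01-type basis. -/
lemma brA01 (hdim : Module.finrank ℂ L = 2) (hcompat : ∀ x y z : L, br (mul x y) z = mul (br x z) y + mul x (br y z))
    {f0 f1 : L} (hind : LinearIndependent ℂ ![f0, f1])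
    (h00 : mul f0 f0 = f0) (h01 : mul f0 f1 = 0) (h10 : mul f1 f0 = 0)
    (h11 : mul f1 f1 = f1) :
    ∀ z : L, br f0 z = 0 ∧ br f1 z = 0 := by
  intro z
  constructor
  · obtain ⟨p, q, hpq⟩ := exists_coords hdim hind (br f0 z)
    have key := hcompat f0 f0 z
    rw [h00, hpq] at key
    simp only [map_add, map_smul, LinearMap.add_apply, LinearMap.smul_apply] at key
    rw [h00, h10, h01] at key
    have key2 : p • f0 + q • f1 = (p + p) • f0 + (0 : ℂ) • f1 := by
      rw [key]; module
    obtain ⟨e1, e2⟩ := pair_unique hind key2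
    have hp : p = 0 := by linear_combination -e1
    rw [hpq, hp, e2]; module
  · obtain ⟨p, q, hpq⟩ := exists_coords hdim hind (br f1 z)
    have key := hcompat f1 f1 z
    rw [h11, hpq] at key
    simp only [map_add, map_smul, LinearMap.add_apply, LinearMap.smul_apply] at key
    rw [h11, h10, h01] at key
    have key2 : p • f0 + q • f1 = (0 : ℂ) • f0 + (q + q) • f1 := by
      rw [key]; module
    obtain ⟨e1, e2⟩ := pair_unique hind key2
    have hq : q = 0 := by linear_combination -e2
    rw [hpq, e1, hq]; module

end Brackets

section Brackets2

variable {L : Type*} [AddCommGroup L] [Module ℂ L]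
variable (mul br : L →ₗ[ℂ] L →ₗ[ℂ] L)

lemma f1_ne_zero {f0 f1 : L} (hind : LinearIndependent ℂ ![f0, f1]) : f1 ≠ 0 := by
  have := hind.ne_zero 1
  simpa using this

lemma f0_ne_zero {f0 f1 : L} (hind : LinearIndependent ℂ ![f0, f1]) : f0 ≠ 0 := by
  have := hind.ne_zero 0
  simpa using this

/-- Bracket on an A02-type basis: `f0` is a unit, `f1·f1 = 0`. -/
lemma brA02 (hdim : Module.finrank ℂ L = 2)
    (hcomm : ∀ x y : L, mul x y = mul y x)
    (hleib : ∀ x y z : L, br (br x y) z = br (br x z) y + br x (br y z))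
    (hcompat : ∀ x y z : L, br (mul x y) z = mul (br x z) y + mul x (br y z))
    {f0 f1 : L} (hind : LinearIndependent ℂ ![f0, f1])
    (hunit : ∀ y : L, mul f0 y = y) (h11 : mul f1 f1 = 0) :
    (∀ z : L, br f0 z = 0) ∧ br f1 f1 = 0 ∧ (∃ α : ℂ, br f1 f0 = α • f1) := by
  have hbr0 : ∀ z : L, br f0 z = 0 := by
    intro z
    have key := hcompat f0 f0 z
    rw [hunit f0, hcomm (br f0 z) f0, hunit (br f0 z)] at key
    nth_rewrite 1 [← add_zero (br f0 z)] at key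
    exact (add_left_cancel key).symm
  have hbr1 : ∀ z : L, ∃ q : ℂ, br f1 z = q • f1 := by
    intro z
    obtain ⟨p, q, hpq⟩ := exists_coords hdim hind (br f1 z)
    have key := hcompat f1 f1 z
    rw [h11, map_zero, LinearMap.zero_apply, hcomm (br f1 z) f1, hpq] at key
    simp only [map_add, map_smul] at key
    rw [hcomm f1 f0, hunit f1, h11] at key
    have key2 : (0 : ℂ) • f0 + (p + p) • f1 = 0 := by
      conv_rhs => rw [key]
      module
    obtain ⟨-, e2⟩ := pair_zero hind key2
    have hp : p = 0 := by linear_combination e2 / 2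
    exact ⟨q, by rw [hpq, hp]; module⟩
  obtain ⟨s, hs⟩ := hbr1 f1
  have hs0 : s = 0 := by
    have key := hleib f1 f1 f1
    nth_rewrite 1 [← add_zero (br (br f1 f1) f1)] at key
    have key2 := add_left_cancel key
    rw [hs, map_smul, hs, smul_smul] at key2
    have := smul_eq_zero.mp key2.symm
    rcases this with h | h
    · exact pow_eq_zero_iff' .. |>.mp (by rwa [pow_two]) |>.1
    · exact absurd h (f1_ne_zero hind)
  exact ⟨hbr0, by rw [hs, hs0, zero_smul], hbr1 f0⟩

end Brackets2

section Brackets3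

variable {L : Type*} [AddCommGroup L] [Module ℂ L]
variable (mul br : L →ₗ[ℂ] L →ₗ[ℂ] L)

lemma sq_self_zero
    (hleib : ∀ x y z : L, br (br x y) z = br (br x z) y + br x (br y z))
    {f1 : L} (hf1 : f1 ≠ 0) {s : ℂ} (hs : br f1 f1 = s • f1) : s = 0 := by
  have key := hleib f1 f1 f1
  nth_rewrite 1 [← add_zero (br (br f1 f1) f1)] at key
  have key2 := add_left_cancel key
  rw [hs, map_smul, hs, smul_smul] at key2
  rcases smul_eq_zero.mp key2.symm with h | h
  · exact pow_eq_zero_iff' .. |>.mp (by rwa [pow_two]) |>.1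
  · exact absurd h hf1

/-- Bracket on an A03-type basis: `f0·f0 = f0`, other products zero. -/
lemma brA03 (hdim : Module.finrank ℂ L = 2)
    (hcomm : ∀ x y : L, mul x y = mul y x)
    (hleib : ∀ x y z : L, br (br x y) z = br (br x z) y + br x (br y z))
    (hcompat : ∀ x y z : L, br (mul x y) z = mul (br x z) y + mul x (br y z))
    {f0 f1 : L} (hind : LinearIndependent ℂ ![f0, f1])
    (h00 : mul f0 f0 = f0) (h01 : mul f0 f1 = 0) (h11 : mul f1 f1 = 0) :
    (∀ z : L, br f0 z = 0) ∧ br f1 f1 = 0 ∧ (∃ α : ℂ, br f1 f0 = α • f1) := by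
  have h10 : mul f1 f0 = 0 := by rw [hcomm, h01]
  have hbr0 : ∀ z : L, br f0 z = 0 := by
    intro z
    obtain ⟨p, q, hpq⟩ := exists_coords hdim hind (br f0 z)
    have key := hcompat f0 f0 z
    rw [h00, hpq] at key
    simp only [map_add, map_smul, LinearMap.add_apply, LinearMap.smul_apply] at key
    rw [h00, h10, h01] at key
    have key2 : p • f0 + q • f1 = (p + p) • f0 + (0 : ℂ) • f1 := by
      rw [key]; module
    obtain ⟨e1, e2⟩ := pair_unique hind key2
    have hp : p = 0 := by linear_combination -e1
    rw [hpq, hp, e2]; module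
  have hbr1 : ∀ z : L, ∃ q : ℂ, br f1 z = q • f1 := by
    intro z
    obtain ⟨p, q, hpq⟩ := exists_coords hdim hind (br f1 z)
    have key := hcompat f0 f1 z
    rw [h01, map_zero, LinearMap.zero_apply, hbr0 z, hpq] at key
    simp only [map_zero, map_add, map_smul, LinearMap.zero_apply] at key
    rw [h00, h01] at key
    have key2 : p • f0 = 0 := by
      conv_rhs => rw [key]
      module
    have hp : p = 0 := by
      rcases smul_eq_zero.mp key2 with h | h
      · exact h
      · exact absurd h (f0_ne_zero hind)
    exact ⟨q, by rw [hpq, hp]; module⟩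
  obtain ⟨s, hs⟩ := hbr1 f1
  have hs0 : s = 0 := sq_self_zero br hleib (f1_ne_zero hind) hs
  exact ⟨hbr0, by rw [hs, hs0, zero_smul], hbr1 f0⟩

/-- Bracket on an A04-type basis: `f0·f0 = f1`, other products zero. -/
lemma brA04 (hdim : Module.finrank ℂ L = 2)
    (hcomm : ∀ x y : L, mul x y = mul y x)
    (hleib : ∀ x y z : L, br (br x y) z = br (br x z) y + br x (br y z))
    (hcompat : ∀ x y z : L, br (mul x y) z = mul (br x z) y + mul x (br y z))
    {f0 f1 : L} (hind : LinearIndependent ℂ ![f0, f1])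
    (h00 : mul f0 f0 = f1) (h01 : mul f0 f1 = 0) (h11 : mul f1 f1 = 0) :
    ∃ α : ℂ, br f0 f0 = α • f1 ∧ br f0 f1 = 0 ∧ br f1 f0 = 0 ∧ br f1 f1 = 0 := by
  have h10 : mul f1 f0 = 0 := by rw [hcomm, h01]
  obtain ⟨p1, q1, hp1⟩ := exists_coords hdim hind (br f0 f0)
  obtain ⟨p2, q2, hp2⟩ := exists_coords hdim hind (br f0 f1)
  have hbr1 : ∀ (z : L) (p q : ℂ), br f0 z = p • f0 + q • f1 →
      br f1 z = (p + p) • f1 := by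
    intro z p q hpq
    have key := hcompat f0 f0 z
    rw [h00, hpq] at key
    simp only [map_add, map_smul, LinearMap.add_apply, LinearMap.smul_apply] at key
    rw [h00, h10, h01] at key
    rw [key]; module
  have h1f0 : br f1 f0 = (p1 + p1) • f1 := hbr1 f0 p1 q1 hp1
  have h1f1 : br f1 f1 = (p2 + p2) • f1 := hbr1 f1 p2 q2 hp2
  -- p2 = 0
  have hp2z : p2 = 0 := by
    have key := hleib f0 f1 f1
    nth_rewrite 1 [← add_zero (br (br f0 f1) f1)] at key
    have key2 := (add_left_cancel key).symm
    rw [h1f1, map_smul, hp2] at key2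
    have key2' : (p2 + p2) • (p2 • f0 + q2 • f1)
        = ((p2 + p2) * p2) • f0 + ((p2 + p2) * q2) • f1 := by module
    rw [key2'] at key2
    obtain ⟨e1, -⟩ := pair_zero hind key2
    have : p2 * p2 = 0 := by linear_combination e1 / 2
    exact pow_eq_zero_iff' .. |>.mp (by rwa [pow_two]) |>.1
  -- p1 = 0 and q1 * q2 = 0
  have hkey00 : br f0 (br f0 f0) = 0 := by
    have key := hleib f0 f0 f0
    nth_rewrite 1 [← add_zero (br (br f0 f0) f0)] at key
    exact (add_left_cancel key).symm
  have hp1z : p1 = 0 := by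
    have key2 := hkey00
    rw [hp1, map_add, map_smul, map_smul, hp1, hp2] at key2
    have key3 : (p1 * p1 + q1 * p2) • f0 + (p1 * q1 + q1 * q2) • f1 = 0 := by
      conv_rhs => rw [← key2]
      module
    obtain ⟨e1, -⟩ := pair_zero hind key3
    have : p1 * p1 = 0 := by linear_combination e1 - q1 * hp2z
    exact pow_eq_zero_iff' .. |>.mp (by rwa [pow_two]) |>.1
  -- q2 = 0
  have hq2z : q2 = 0 := by
    have key := hleib f0 f0 f1
    rw [hp1, hp1z, zero_smul, zero_add] at key
    rw [hp2, hp2z, zero_smul, zero_add] at key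
    simp only [map_smul, LinearMap.smul_apply] at key
    rw [h1f1, h1f0, hp2, hp1z, hp2z] at key
    have keyL : q1 • (((0 : ℂ) + 0) • f1) = (0 : ℂ) • f0 + (0 : ℂ) • f1 := by module
    have keyR : q2 • (((0 : ℂ) + 0) • f1) + q2 • ((0 : ℂ) • f0 + q2 • f1)
        = (0 : ℂ) • f0 + (q2 * q2) • f1 := by module
    rw [keyL, keyR] at key
    obtain ⟨-, e2⟩ := pair_unique hind key
    have : q2 * q2 = 0 := by linear_combination -e2
    exact pow_eq_zero_iff' .. |>.mp (by rwa [pow_two]) |>.1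
  exact ⟨q1, by rw [hp1, hp1z]; module, by rw [hp2, hp2z, hq2z]; module,
    by rw [h1f0, hp1z]; module, by rw [h1f1, hp2z]; module⟩

end Brackets3

section FromIdem

variable {L : Type*} [AddCommGroup L] [Module ℂ L]
variable (mul br : L →ₗ[ℂ] L →ₗ[ℂ] L)

lemma indep_of_not_collinear {u v : L} (hu : u ≠ 0) (hv : ∀ c : ℂ, v ≠ c • u) :
    LinearIndependent ℂ ![u, v] := by
  rw [LinearIndependent.pair_iff]
  intro s t hst
  rcases eq_or_ne t 0 with ht | ht
  · refine ⟨?_, ht⟩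
    rw [ht, zero_smul, add_zero] at hst
    exact (smul_eq_zero.mp hst).resolve_right hu
  · exfalso
    apply hv (-s / t)
    have habs : t • v = (-s) • u := by
      rw [← sub_eq_zero, ← hst]; module
    calc v = t⁻¹ • (t • v) := by rw [smul_smul, inv_mul_cancel₀ ht, one_smul]
      _ = t⁻¹ • ((-s) • u) := by rw [habs]
      _ = (-s / t) • u := by rw [smul_smul, div_eq_inv_mul]

lemma from_idem (hdim : Module.finrank ℂ L = 2)
    (hcomm : ∀ x y : L, mul x y = mul y x)
    (hassoc : ∀ x y z : L, mul (mul x y) z = mul x (mul y z))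
    (hleib : ∀ x y z : L, br (br x y) z = br (br x z) y + br x (br y z))
    (hcompat : ∀ x y z : L, br (mul x y) z = mul (br x z) y + mul x (br y z))
    {e : L} (hee : mul e e = e) (hne : e ≠ 0) :
    Iso2 (fun x y => mul x y) (fun x y => br x y) (tm cA01) zm ∨
    (∃ α : ℂ, Iso2 (fun x y => mul x y) (fun x y => br x y)
      (tm cA02) (tm (tbl 0 0 ![0,α] 0))) ∨
    (∃ α : ℂ, Iso2 (fun x y => mul x y) (fun x y => br x y)
      (tm cA03) (tm (tbl 0 0 ![0,α] 0))) := by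
  by_cases hunit : ∀ y : L, mul e y = y
  · -- e is a unit
    obtain ⟨y, hy⟩ := exists_noncollinear hdim e
    have hind : LinearIndependent ℂ ![e, y] := indep_of_not_collinear hne hy
    obtain ⟨u', v', huv⟩ := exists_coords hdim hind (mul y y)
    set g := y - (v'/2) • e with hgdef
    have hind2 : LinearIndependent ℂ ![e, g] :=
      indep_change' hind 1 0 (-(v'/2)) 1 (by norm_num) (by module) (by rw [hgdef]; module)
    have heg : mul e g = g := hunit g
    have hge : mul g e = g := by rw [hcomm]; exact hunit g
    have hye : mul y e = y := by rw [hcomm]; exact hunit y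
    have hgg : mul g g = (u' + v' * v' / 4) • e := by
      rw [hgdef]
      simp only [map_sub, map_smul, LinearMap.sub_apply, LinearMap.smul_apply]
      rw [hee, hunit y, hye, huv]
      module
    by_cases hw : u' + v' * v' / 4 = 0
    · -- A02 case
      rw [hw, zero_smul] at hgg
      obtain ⟨hb0, hb11, α, hb10⟩ :=
        brA02 mul br hdim hcomm hleib hcompat hind2 hunit hgg
      right; left
      refine ⟨α, iso2_of_basis hdim mul br hind2 cA02 (tbl 0 0 ![0,α] 0) ?_ ?_⟩
      · intro i j
        fin_cases i <;> fin_cases j <;>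
          simp [cA02, tbl, hee, heg, hge, hgg]
      · intro i j
        fin_cases i <;> fin_cases j <;>
          simp [tbl, hb0, hb10, hb11]
    · -- A01 case, w ≠ 0
      obtain ⟨r, hr⟩ := IsAlgClosed.exists_pow_nat_eq (u' + v' * v' / 4) zero_lt_two
      have hrne : r ≠ 0 := by
        intro h0
        rw [h0] at hr
        exact hw (by rw [← hr]; ring)
      set g' := r⁻¹ • g with hg'def
      have hind3 : LinearIndependent ℂ ![e, g'] :=
        indep_change' hind2 1 0 0 r⁻¹ (by simpa using inv_ne_zero hrne)
          (by module) (by rw [hg'def]; module)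
      have heg' : mul e g' = g' := hunit g'
      have hg'e : mul g' e = g' := by rw [hcomm]; exact hunit g'
      have hg'g' : mul g' g' = e := by
        have step : mul g' g' = (r⁻¹ * r⁻¹ * (u' + v' * v' / 4)) • e := by
          rw [hg'def]
          simp only [map_smul, LinearMap.smul_apply, smul_smul]
          rw [hgg, smul_smul]
        rw [step,
          show r⁻¹ * r⁻¹ * (u' + v' * v' / 4) = 1 from by
            rw [← hr, pow_two]; field_simp, one_smul]
      set h1 := (1/2 : ℂ) • e + (1/2 : ℂ) • g' with hh1
      set h2 := (1/2 : ℂ) • e + (-(1/2) : ℂ) • g' with hh2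
      have hind4 : LinearIndependent ℂ ![h1, h2] :=
        indep_change hind3 (1/2) (1/2) (1/2) (-(1/2)) (by norm_num)
      have hm11 : mul h1 h1 = h1 := by
        rw [hh1]
        simp only [map_add, map_smul, LinearMap.add_apply, LinearMap.smul_apply]
        rw [hee, heg', hg'e, hg'g']
        module
      have hm22 : mul h2 h2 = h2 := by
        rw [hh2]
        simp only [map_add, map_smul, LinearMap.add_apply, LinearMap.smul_apply]
        rw [hee, heg', hg'e, hg'g']
        module
      have hm12 : mul h1 h2 = 0 := by
        rw [hh1, hh2]
        simp only [map_add, map_smul, LinearMap.add_apply, LinearMap.smul_apply]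
        rw [hee, heg', hg'e, hg'g']
        module
      have hm21 : mul h2 h1 = 0 := by rw [hcomm]; exact hm12
      have hball := brA01 mul br hdim hcompat hind4 hm11 hm12 hm21 hm22
      left
      rw [zm_eq_tm]
      refine iso2_of_basis hdim mul br hind4 cA01 (tbl 0 0 0 0) ?_ ?_
      · intro i j
        fin_cases i <;> fin_cases j <;>
          simp [cA01, tbl, hm11, hm12, hm21, hm22]
      · intro i j
        fin_cases i <;> fin_cases j <;>
          simp [tbl, (hball h1).1, (hball h1).2, (hball h2).1, (hball h2).2]
  · -- e is not a unit
    push_neg at hunit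
    obtain ⟨y, hy⟩ := hunit
    set f := y - mul e y with hfdef
    have hf : f ≠ 0 := sub_ne_zero.mpr (Ne.symm hy)
    have hef : mul e f = 0 := by
      rw [hfdef, map_sub]
      rw [← hassoc e e y, hee]
      simp
    have hfe : mul f e = 0 := by rw [hcomm]; exact hef
    have hind : LinearIndependent ℂ ![e, f] := by
      apply indep_of_not_collinear hne
      intro c hc
      apply hf
      rw [hc] at hef ⊢
      rw [map_smul, hee] at hef
      rw [hef]
    obtain ⟨c', d', hcd⟩ := exists_coords hdim hind (mul f f)
    have hc' : c' = 0 := by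
      have key := hassoc e f f
      rw [hef, hcd] at key
      simp only [map_zero, map_add, map_smul, LinearMap.zero_apply] at key
      rw [hee, hef] at key
      simp only [smul_zero, add_zero] at key
      exact (smul_eq_zero.mp key.symm).resolve_right hne
    rw [hc', zero_smul, zero_add] at hcd
    by_cases hd : d' = 0
    · -- A03 case
      rw [hd, zero_smul] at hcd
      obtain ⟨hb0, hb11, α, hb10⟩ :=
        brA03 mul br hdim hcomm hleib hcompat hind hee hef hcd
      right; right
      refine ⟨α, iso2_of_basis hdim mul br hind cA03 (tbl 0 0 ![0,α] 0) ?_ ?_⟩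
      · intro i j
        fin_cases i <;> fin_cases j <;>
          simp [cA03, tbl, hee, hef, hfe, hcd]
      · intro i j
        fin_cases i <;> fin_cases j <;>
          simp [tbl, hb0, hb10, hb11]
    · -- A01 case with f2 = d'⁻¹ • f
      set f2 := d'⁻¹ • f with hf2def
      have hind2 : LinearIndependent ℂ ![e, f2] :=
        indep_change' hind 1 0 0 d'⁻¹ (by simpa using inv_ne_zero hd)
          (by module) (by rw [hf2def]; module)
      have hef2 : mul e f2 = 0 := by
        rw [hf2def, map_smul, hef, smul_zero]
      have hf2e : mul f2 e = 0 := by rw [hcomm]; exact hef2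
      have hf2f2 : mul f2 f2 = f2 := by
        have step : mul f2 f2 = (d'⁻¹ * d'⁻¹ * d') • f := by
          rw [hf2def]
          simp only [map_smul, LinearMap.smul_apply, smul_smul]
          rw [hcd, smul_smul]
        rw [step,
          show d'⁻¹ * d'⁻¹ * d' = d'⁻¹ from by field_simp, hf2def]
      have hball := brA01 mul br hdim hcompat hind2 hee hef2 hf2e hf2f2
      left
      rw [zm_eq_tm]
      refine iso2_of_basis hdim mul br hind2 cA01 (tbl 0 0 0 0) ?_ ?_
      · intro i j
        fin_cases i <;> fin_cases j <;>
          simp [cA01, tbl, hee, hef2, hf2e, hf2f2]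
      · intro i j
        fin_cases i <;> fin_cases j <;>
          simp [tbl, (hball e).1, (hball e).2, (hball f2).1, (hball f2).2]

end FromIdem

section FromZeroMul

variable {L : Type*} [AddCommGroup L] [Module ℂ L]
variable (mul br : L →ₗ[ℂ] L →ₗ[ℂ] L)

lemma from_zero_mul (hdim : Module.finrank ℂ L = 2)
    (hleib : ∀ x y z : L, br (br x y) z = br (br x z) y + br x (br y z))
    (hm0 : ∀ x y : L, mul x y = 0) (hbr : ∃ x y : L, br x y ≠ 0) :
    Iso2 (fun x y => mul x y) (fun x y => br x y) zm (tm (tbl ![0,1] 0 0 0)) ∨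
    Iso2 (fun x y => mul x y) (fun x y => br x y) zm (tm (tbl 0 ![1,0] 0 0)) ∨
    Iso2 (fun x y => mul x y) (fun x y => br x y) zm (tm (tbl 0 ![0,1] ![0,-1] 0)) := by
  by_cases hsq : ∃ x : L, br x x ≠ 0
  · -- Case A
    obtain ⟨x, hx⟩ := hsq
    set q := br x x with hqdef
    have hxq : br x q = 0 := by
      have key := hleib x x x
      nth_rewrite 1 [← add_zero (br (br x x) x)] at key
      exact (add_left_cancel key).symm
    have hxne : x ≠ 0 := by
      intro h0
      apply hx
      rw [hqdef, h0]
      simp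
    have hind : LinearIndependent ℂ ![x, q] := by
      apply indep_of_not_collinear hxne
      intro c hc
      apply hx
      have h2 : br x q = c • br x x := by conv_lhs => rw [hc, map_smul]
      rw [hxq, ← hqdef] at h2
      rcases smul_eq_zero.mp h2.symm with h | h
      · rw [hc, h, zero_smul]
      · exact h
    have hqq : br q q = 0 := by
      have key := hleib x x q
      rw [hxq] at key
      simp only [map_zero, LinearMap.zero_apply, add_zero, zero_add] at key
      rw [← hqdef] at key
      exact key
    obtain ⟨a, b, hab⟩ := exists_coords hdim hind (br q x)
    have ha : a = 0 := by
      have key := hleib x q x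
      rw [hxq, ← hqdef, hqq, hab] at key
      simp only [map_zero, LinearMap.zero_apply, map_add, map_smul, zero_add] at key
      rw [hxq, ← hqdef] at key
      have key2 : a • q = 0 := by
        conv_rhs => rw [key]
        module
      rcases smul_eq_zero.mp key2 with h | h
      · exact h
      · exact absurd h (fun h0 => hx (hqdef ▸ h0))
    rw [ha, zero_smul, zero_add] at hab
    by_cases hb : b = 0
    · -- L1
      rw [hb, zero_smul] at hab
      left
      rw [zm_eq_tm]
      refine iso2_of_basis hdim mul br hind (tbl 0 0 0 0) (tbl ![0,1] 0 0 0) ?_ ?_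
      · intro i j
        fin_cases i <;> fin_cases j <;> simp [tbl, hm0]
      · intro i j
        fin_cases i <;> fin_cases j <;>
          simp [tbl, ← hqdef, hxq, hab, hqq]
    · -- L2
      set f1 := b⁻¹ • x + (-(b⁻¹ * b⁻¹)) • q with hf1def
      have hind2 : LinearIndependent ℂ ![q, f1] :=
        indep_change' hind 0 1 b⁻¹ (-(b⁻¹ * b⁻¹))
          (by simpa using inv_ne_zero hb) (by module) hf1def
      have hbrf1 : (br f1 : L →ₗ[ℂ] L) = b⁻¹ • br x + (-(b⁻¹ * b⁻¹)) • br q := by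
        rw [hf1def, map_add, map_smul, map_smul]
      have hqf1 : br q f1 = q := by
        rw [hf1def, map_add, map_smul, map_smul, hab, hqq, smul_zero, add_zero,
          smul_smul, inv_mul_cancel₀ hb, one_smul]
      have hf1q : br f1 q = 0 := by
        rw [hbrf1]
        simp only [LinearMap.add_apply, LinearMap.smul_apply]
        rw [hxq, hqq, smul_zero, smul_zero, add_zero]
      have hxf1 : br x f1 = b⁻¹ • q := by
        rw [hf1def, map_add, map_smul, map_smul, ← hqdef, hxq, smul_zero, add_zero]
      have hf1f1 : br f1 f1 = 0 := by
        rw [hbrf1]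
        simp only [LinearMap.add_apply, LinearMap.smul_apply]
        rw [hxf1, hqf1, smul_smul]
        module
      right; left
      rw [zm_eq_tm]
      refine iso2_of_basis hdim mul br hind2 (tbl 0 0 0 0) (tbl 0 ![1,0] 0 0) ?_ ?_
      · intro i j
        fin_cases i <;> fin_cases j <;> simp [tbl, hm0]
      · intro i j
        fin_cases i <;> fin_cases j <;>
          simp [tbl, hqq, hqf1, hf1q, hf1f1]
  · -- Case B : antisymmetric
    push_neg at hsq
    have hanti : ∀ x y : L, br x y = -br y x := by
      intro x y
      have key : br (x + y) (x + y) = 0 := hsq _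
      simp only [map_add, LinearMap.add_apply] at key
      rw [hsq x, hsq y] at key
      rw [zero_add, add_zero, add_comm] at key
      exact eq_neg_of_add_eq_zero_left key
    obtain ⟨u, v, huv⟩ := hbr
    set w := br u v with hwdef
    have hune : u ≠ 0 := by
      intro h0; apply huv; rw [hwdef, h0]; simp
    have hindUV : LinearIndependent ℂ ![u, v] := by
      apply indep_of_not_collinear hune
      intro c hc
      apply huv
      rw [hwdef, hc, map_smul, hsq u, smul_zero]
    obtain ⟨s, t, hst⟩ := exists_coords hdim hindUV w
    have huw : br u w = t • w := by
      conv_lhs => rw [hst]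
      rw [map_add, map_smul, map_smul, hsq u, smul_zero, zero_add, ← hwdef]
    have hvw : br v w = (-s) • w := by
      conv_lhs => rw [hst]
      rw [map_add, map_smul, map_smul, hsq v, smul_zero, add_zero, hanti v u, ← hwdef]
      module
    have hwne : w ≠ 0 := huv
    obtain ⟨e1, hind2, hew⟩ : ∃ e1 : L, LinearIndependent ℂ ![e1, w] ∧ br e1 w = w := by
      by_cases ht : t = 0
      · have hs : s ≠ 0 := by
          intro h0
          apply hwne
          rw [hst, ht, h0, zero_smul, zero_smul, add_zero]
        refine ⟨(-s⁻¹) • v, ?_, ?_⟩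
        · refine indep_change' hindUV 0 (-s⁻¹) s t ?_ (by module) hst
          rw [ht]
          simp [hs]
        · rw [map_smul, LinearMap.smul_apply, hvw, smul_smul]
          rw [show (-s⁻¹) * (-s) = 1 from by field_simp, one_smul]
      · refine ⟨t⁻¹ • u, ?_, ?_⟩
        · refine indep_change' hindUV t⁻¹ 0 s t ?_ (by module) hst
          simp [inv_mul_cancel₀ ht]
        · rw [map_smul, LinearMap.smul_apply, huw, smul_smul, inv_mul_cancel₀ ht, one_smul]
    have hwe : br w e1 = -w := by rw [hanti w e1, hew]
    right; right
    rw [zm_eq_tm]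
    refine iso2_of_basis hdim mul br hind2 (tbl 0 0 0 0) (tbl 0 ![0,1] ![0,-1] 0) ?_ ?_
    · intro i j
      fin_cases i <;> fin_cases j <;> simp [tbl, hm0]
    · intro i j
      fin_cases i <;> fin_cases j <;>
        simp [tbl, hsq, hew, hwe]

end FromZeroMul

/-- Every nonzero 2-dimensional Leibniz–Poisson algebra over ℂ is
isomorphic to one of L1, L2, L3 (with `· ≡ 0`), L4, L5^α, L6^α, L7^α. -/
theorem statement5 (L : Type*) [AddCommGroup L] [Module ℂ L]
    (hdim : Module.finrank ℂ L = 2)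
    (mul br : L →ₗ[ℂ] L →ₗ[ℂ] L)
    (hcomm : ∀ x y : L, mul x y = mul y x)
    (hassoc : ∀ x y z : L, mul (mul x y) z = mul x (mul y z))
    (hleib : ∀ x y z : L, br (br x y) z = br (br x z) y + br x (br y z))
    (hcompat : ∀ x y z : L, br (mul x y) z = mul (br x z) y + mul x (br y z))
    (hnz : (∃ x y : L, mul x y ≠ 0) ∨ (∃ x y : L, br x y ≠ 0)) :
    -- L1
    Iso2 (fun x y => mul x y) (fun x y => br x y) zm (tm (tbl ![0,1] 0 0 0)) ∨
    -- L2
    Iso2 (fun x y => mul x y) (fun x y => br x y) zm (tm (tbl 0 ![1,0] 0 0)) ∨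
    -- L3
    Iso2 (fun x y => mul x y) (fun x y => br x y) zm (tm (tbl 0 ![0,1] ![0,-1] 0)) ∨
    -- L4
    Iso2 (fun x y => mul x y) (fun x y => br x y) (tm cA01) zm ∨
    -- L5^α
    (∃ α : ℂ, Iso2 (fun x y => mul x y) (fun x y => br x y)
      (tm cA02) (tm (tbl 0 0 ![0,α] 0))) ∨
    -- L6^α
    (∃ α : ℂ, Iso2 (fun x y => mul x y) (fun x y => br x y)
      (tm cA03) (tm (tbl 0 0 ![0,α] 0))) ∨
    -- L7^α
    (∃ α : ℂ, Iso2 (fun x y => mul x y) (fun x y => br x y)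
      (tm cA04) (tm (tbl ![0,α] 0 0 0))) := by
  by_cases hm0 : ∀ x y : L, mul x y = 0
  · have hbr : ∃ x y : L, br x y ≠ 0 := by
      rcases hnz with ⟨x, y, h⟩ | h
      · exact absurd (hm0 x y) h
      · exact h
    rcases from_zero_mul mul br hdim hleib hm0 hbr with h | h | h
    · exact Or.inl h
    · exact Or.inr (Or.inl h)
    · exact Or.inr (Or.inr (Or.inl h))
  · -- mul is nonzero: find x with x·x ≠ 0
    have hsq : ∃ x : L, mul x x ≠ 0 := by
      by_contra h
      push_neg at h
      apply hm0
      intro x y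
      have key : mul (x + y) (x + y) = 0 := h _
      simp only [map_add, LinearMap.add_apply] at key
      rw [h x, h y, zero_add, add_zero, hcomm y x] at key
      have key2 : (2 : ℂ) • mul x y = 0 := by rw [two_smul]; exact key
      rcases smul_eq_zero.mp key2 with h2 | h2
      · norm_num at h2
      · exact h2
    obtain ⟨x, hx⟩ := hsq
    have hxne : x ≠ 0 := fun h0 => hx (by rw [h0]; simp)
    have finish_idem : ∀ e : L, mul e e = e → e ≠ 0 → _ := fun e hee hne =>
      from_idem mul br hdim hcomm hassoc hleib hcompat hee hne
    by_cases hcol : ∃ c : ℂ, mul x x = c • x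
    · obtain ⟨c, hc⟩ := hcol
      have hcne : c ≠ 0 := fun h0 => hx (by rw [hc, h0, zero_smul])
      set e := c⁻¹ • x with hedef
      have hee : mul e e = e := by
        have step : mul e e = (c⁻¹ * c⁻¹ * c) • x := by
          rw [hedef]
          simp only [map_smul, LinearMap.smul_apply, smul_smul]
          rw [hc, smul_smul]
        rw [step, show c⁻¹ * c⁻¹ * c = c⁻¹ from by field_simp, hedef]
      have hne : e ≠ 0 := by
        rw [hedef]; exact smul_ne_zero (inv_ne_zero hcne) hxne
      rcases from_idem mul br hdim hcomm hassoc hleib hcompat hee hne with h | h | h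
      · exact Or.inr <| Or.inr <| Or.inr <| Or.inl h
      · exact Or.inr <| Or.inr <| Or.inr <| Or.inr <| Or.inl h
      · exact Or.inr <| Or.inr <| Or.inr <| Or.inr <| Or.inr <| Or.inl h
    · push_neg at hcol
      set z := mul x x with hzdef
      have hind : LinearIndependent ℂ ![x, z] := indep_of_not_collinear hxne hcol
      have hzne : z ≠ 0 := f1_ne_zero hind
      obtain ⟨a, b, hab⟩ := exists_coords hdim hind (mul x z)
      by_cases ha : a = 0
      · rw [ha, zero_smul, zero_add] at hab
        by_cases hbz : b = 0
        · -- A04 case: L7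
          have hxz : mul x z = 0 := by rw [hab, hbz, zero_smul]
          have hzx : mul z x = 0 := by rw [hcomm]; exact hxz
          have hzzz : mul z z = 0 := by
            have key := hassoc x x z
            rw [← hzdef, hxz, map_zero] at key
            exact key
          obtain ⟨α, hb00, hb01, hb10, hb11⟩ :=
            brA04 mul br hdim hcomm hleib hcompat hind hzdef.symm hxz hzzz
          refine Or.inr <| Or.inr <| Or.inr <| Or.inr <| Or.inr <| Or.inr ⟨α, ?_⟩
          refine iso2_of_basis hdim mul br hind cA04 (tbl ![0,α] 0 0 0) ?_ ?_
          · intro i j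
            fin_cases i <;> fin_cases j <;>
              simp [cA04, tbl, ← hzdef, hxz, hzx, hzzz]
          · intro i j
            fin_cases i <;> fin_cases j <;>
              simp [tbl, hb00, hb01, hb10, hb11]
        · -- nonzero root, e := (b*b)⁻¹ • z idempotent
          have hzz2 : mul z z = (b * b) • z := by
            have key := hassoc x x z
            rw [← hzdef, hab, map_smul, hab, smul_smul] at key
            exact key
          set e := (b * b)⁻¹ • z with hedef
          have hee : mul e e = e := by
            have step : mul e e = ((b * b)⁻¹ * (b * b)⁻¹ * (b * b)) • z := by
              rw [hedef]
              simp only [map_smul, LinearMap.smul_apply, smul_smul]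
              rw [hzz2, smul_smul]
            rw [step, show (b * b)⁻¹ * (b * b)⁻¹ * (b * b) = (b * b)⁻¹ from by
              field_simp, hedef]
          have hne : e ≠ 0 := by
            rw [hedef]
            exact smul_ne_zero (inv_ne_zero (mul_ne_zero hbz hbz)) hzne
          rcases from_idem mul br hdim hcomm hassoc hleib hcompat hee hne with h | h | h
          · exact Or.inr <| Or.inr <| Or.inr <| Or.inl h
          · exact Or.inr <| Or.inr <| Or.inr <| Or.inr <| Or.inl h
          · exact Or.inr <| Or.inr <| Or.inr <| Or.inr <| Or.inr <| Or.inl h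
      · -- a ≠ 0 : unit u := a⁻¹ • (z - b • x)
        set u := a⁻¹ • (z - b • x) with hudef
        have hux : mul u x = x := by
          have step : mul u x = a⁻¹ • (mul x z - b • z) := by
            rw [hudef, map_smul, LinearMap.smul_apply, map_sub, LinearMap.sub_apply,
              map_smul, LinearMap.smul_apply, hcomm z x, ← hzdef]
          rw [step, hab]
          rw [show a • x + b • z - b • z = a • x from by module, smul_smul,
            inv_mul_cancel₀ ha, one_smul]
        have huz : mul u z = z := by
          have key := hassoc u x x
          rw [hux, ← hzdef] at key
          exact key.symm
        have huu : mul u u = u := by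
          have step : mul u u = a⁻¹ • (mul u z - mul u (b • x)) := by
            nth_rewrite 2 [hudef]
            rw [map_smul (mul u), map_sub (mul u)]
          rw [step, map_smul (mul u), huz, hux, ← hudef]
        have hune : u ≠ 0 := by
          intro h0
          rw [h0] at hux
          apply hxne
          rw [← hux]
          simp
        rcases from_idem mul br hdim hcomm hassoc hleib hcompat huu hune with h | h | h
        · exact Or.inr <| Or.inr <| Or.inr <| Or.inl h
        · exact Or.inr <| Or.inr <| Or.inr <| Or.inr <| Or.inl h
        · exact Or.inr <| Or.inr <| Or.inr <| Or.inr <| Or.inr <| Or.inl h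
end
end

section
/- Every nonzero 2-dimensional generic Poisson algebra (G, ·, [−,−]) over ℂ is isomorphic to one of the following algebras, given on a basis e1, e2 (all unlisted products of basis elements, other than those forced by commutativity of · or anticommutativity of [−,−], are zero): with [−,−] ≡ 0: A01: e1·e1 = e1, e2·e2 = e2; A02: e1·e1 = e1, e1·e2 = e2; A03: e1·e1 = e1; A04: e1·e1 = e2; or with · ≡ 0: the algebra with [e1,e2] = e2, [e2,e1] = −e2. -/
noncomputable section

/-!
If the bracket is nonzero, pick a basis `e, w` with `[e, w] = w`. The derivation `[·, e]` is
diagonal with eigenvalues `0` on `e` and `-1` on `w`, and the Leibniz rule makes eigenvalues add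
under `·`; hence `e·e ∈ ℂe`, `e·w ∈ ℂw`, `w·w = 0`, and `[e·e, w] = 2 e·w` together with
associativity forces `· = 0`.

If the bracket vanishes, some `x·x ≠ 0`. Either `x·x ∈ ℂx`, or `x, x²` is a basis and
`x³ = αx + βx²`; this yields a nonzero idempotent `e` (a rescaling of `x`, `x²`, or the unit
`α⁻¹(x² - βx)`) unless `x³ = 0`, which is A04. The Peirce decomposition with respect to `e`
gives A03 or A01 when `e` is not a unit, and A02 or A01 (after completing the square and taking
a square root) when it is.
-/

open Module

section General

variable {K M : Type*} [Field K] [AddCommGroup M] [Module K M] {mul br : M →ₗ[K] M →ₗ[K] M}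

theorem exists_linearIndependent_pair (hdim : finrank K M = 2) {x : M} (hx : x ≠ 0) :
    ∃ y, LinearIndependent K ![x, y] := by
  have hlt : K ∙ x < ⊤ := span_lt_top_of_card_lt_finrank (by simp [hdim])
  obtain ⟨y, -, hy⟩ := SetLike.exists_of_lt hlt
  refine ⟨y, (LinearIndependent.pair_iff' hx).2 fun a hay => hy ?_⟩
  exact hay ▸ Submodule.smul_mem _ a (Submodule.mem_span_singleton_self x)

theorem exists_eq_smul_add_smul (hdim : finrank K M = 2) {x y : M}
    (hxy : LinearIndependent K ![x, y]) (v : M) : ∃ a b : K, v = a • x + b • y := by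
  let b := basisOfLinearIndependentOfCardEqFinrank hxy (by simp [hdim])
  refine ⟨b.equivFun v 0, b.equivFun v 1, ?_⟩
  simpa [b, Fin.sum_univ_two] using (b.sum_equivFun v).symm

theorem LinearIndependent.pair_smul_right {x y : M} (h : LinearIndependent K ![x, y]) {a : K}
    (ha : a ≠ 0) : LinearIndependent K ![x, a • y] := by
  simpa using (LinearIndependent.pair_smul_smul_iff isUnit_one ha.isUnit).2 h

theorem exists_mul_self_ne_zero [NeZero (2 : K)] (hcomm : ∀ x y, mul x y = mul y x)
    (h : ∃ x y, mul x y ≠ 0) : ∃ x, mul x x ≠ 0 := by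
  obtain ⟨x, y, hxy⟩ := h
  by_contra! hsq
  have hpol : (2 : K) • mul x y = 0 := by
    have h := hsq (x + y)
    simp only [map_add, LinearMap.add_apply, hsq, hcomm y x] at h
    linear_combination (norm := module) h
  exact hxy ((smul_eq_zero.1 hpol).resolve_left two_ne_zero)

theorem mul_self_inv_smul_of_mul_self_eq {x : M} {a : K} (h : mul x x = a • x) (ha : a ≠ 0) :
    mul (a⁻¹ • x) (a⁻¹ • x) = a⁻¹ • x := by
  simp only [map_smul, LinearMap.smul_apply, h, smul_smul, inv_mul_cancel₀ ha, mul_one]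

theorem mul_self_eq_self_of_mul_cube_eq (hassoc : ∀ x y z, mul (mul x y) z = mul x (mul y z))
    {x : M} {α β : K} (h : mul x (mul x x) = α • x + β • mul x x) (hα : α ≠ 0) :
    mul (α⁻¹ • (mul x x - β • x)) (α⁻¹ • (mul x x - β • x)) = α⁻¹ • (mul x x - β • x) := by
  set e := α⁻¹ • (mul x x - β • x)
  -- `e` is the unit of the algebra generated by `x`
  have hex : mul e x = x := by
    simp only [e, map_smul, map_sub, LinearMap.smul_apply, LinearMap.sub_apply, hassoc, h]
    rw [add_sub_cancel_right, smul_smul, inv_mul_cancel₀ hα, one_smul]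
  have hexx : mul e (mul x x) = mul x x := by rw [← hassoc, hex]
  change mul e (α⁻¹ • (mul x x - β • x)) = e
  rw [(mul e).map_smul, (mul e).map_sub, (mul e).map_smul, hexx, hex]

theorem exists_idempotent_or_mul_cube_eq_zero (hdim : finrank K M = 2)
    (hassoc : ∀ x y z, mul (mul x y) z = mul x (mul y z)) {x : M} (hx : mul x x ≠ 0) :
    (∃ e, e ≠ 0 ∧ mul e e = e) ∨
      (LinearIndependent K ![x, mul x x] ∧ mul x (mul x x) = 0) := by
  have hx0 : x ≠ 0 := by rintro rfl; simp at hx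
  by_cases hli : LinearIndependent K ![x, mul x x]
  · obtain ⟨α, β, hcube⟩ := exists_eq_smul_add_smul hdim hli (mul x (mul x x))
    by_cases hα : α = 0
    · by_cases hβ : β = 0
      · exact Or.inr ⟨hli, by simp [hcube, hα, hβ]⟩
      · have hsq : mul (mul x x) (mul x x) = (β ^ 2) • mul x x := by
          rw [hassoc, hcube, hα]
          simp [hcube, hα, smul_smul, sq]
        exact Or.inl ⟨_, smul_ne_zero (by simpa using hβ) hx,
          mul_self_inv_smul_of_mul_self_eq hsq (pow_ne_zero 2 hβ)⟩
    · refine Or.inl ⟨_, smul_ne_zero (inv_ne_zero hα) fun h0 => ?_,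
        mul_self_eq_self_of_mul_cube_eq hassoc hcube hα⟩
      have := (LinearIndependent.pair_iff.1 hli) (-β) 1 (by rw [← h0]; module)
      exact one_ne_zero this.2
  · obtain ⟨a, ha⟩ : ∃ a : K, a • x = mul x x := by
      simpa [LinearIndependent.pair_iff' hx0] using hli
    have ha0 : a ≠ 0 := by rintro rfl; simp [← ha] at hx
    exact Or.inl
      ⟨_, smul_ne_zero (inv_ne_zero ha0) hx0, mul_self_inv_smul_of_mul_self_eq ha.symm ha0⟩

theorem exists_linearIndependent_mul_eq_self_or_eq_zero (hdim : finrank K M = 2)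
    (hassoc : ∀ x y z, mul (mul x y) z = mul x (mul y z)) {e : M} (he : e ≠ 0)
    (hee : mul e e = e) : ∃ y, LinearIndependent K ![e, y] ∧ (mul e y = y ∨ mul e y = 0) := by
  obtain ⟨y, hli⟩ := exists_linearIndependent_pair hdim he
  by_cases hunit : mul e y = y
  · exact ⟨y, hli, Or.inl hunit⟩
  have hw : mul e (y - mul e y) = 0 := by rw [map_sub, ← hassoc, hee, sub_self]
  refine ⟨y - mul e y, (LinearIndependent.pair_iff' he).2 fun c hc => hunit ?_, Or.inr hw⟩
  have hc0 : c • e = 0 := by rw [← hw, ← hc, map_smul, hee]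
  rw [eq_comm, ← sub_eq_zero, ← hc, (smul_eq_zero.1 hc0).resolve_right he, zero_smul]

theorem exists_linearIndependent_mul_self_eq_smul [NeZero (2 : K)] (hdim : finrank K M = 2)
    (hcomm : ∀ x y, mul x y = mul y x) {e y : M} (hli : LinearIndependent K ![e, y])
    (hee : mul e e = e) (hey : mul e y = y) :
    ∃ z, ∃ ρ : K, LinearIndependent K ![e, z] ∧ mul e z = z ∧ mul z z = ρ • e := by
  obtain ⟨γ, δ, hyy⟩ := exists_eq_smul_add_smul hdim hli (mul y y)
  -- completing the square
  refine ⟨(-(δ / 2)) • e + y, γ + (δ / 2) ^ 2,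
    (LinearIndependent.pair_add_smul_right_iff _).2 hli, ?_, ?_⟩
  · simp only [map_add, map_smul, hee, hey]
  · simp only [map_add, map_smul, LinearMap.add_apply, LinearMap.smul_apply, hee, hey,
      hcomm y e, hyy]
    match_scalars <;> field_simp <;> ring

theorem linearIndependent_of_br_eq_right (halt : br.IsAlt) {e w : M} (hw : w ≠ 0)
    (h : br e w = w) : LinearIndependent K ![e, w] := by
  have he : e ≠ 0 := by rintro rfl; simp [eq_comm, hw] at h
  refine (LinearIndependent.pair_iff' he).2 fun c hc => hw ?_
  rw [← h, ← hc, map_smul, halt.self_eq_zero, smul_zero]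

theorem exists_linearIndependent_br_eq_right (hdim : finrank K M = 2) (halt : br.IsAlt)
    (h : ∃ x y, br x y ≠ 0) : ∃ e w, LinearIndependent K ![e, w] ∧ br e w = w := by
  obtain ⟨x, y, hw⟩ := h
  have hx : x ≠ 0 := by rintro rfl; simp at hw
  have hxy : LinearIndependent K ![x, y] :=
    (LinearIndependent.pair_iff' hx).2 fun c hc => hw (by simp [← hc, halt.self_eq_zero])
  obtain ⟨a, b, hab⟩ := exists_eq_smul_add_smul hdim hxy (br x y)
  have hxw : br x (br x y) = b • br x y := by
    conv_lhs => rw [hab]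
    simp [halt.self_eq_zero]
  have hyw : br y (br x y) = (-a) • br x y := by
    conv_lhs => rw [hab]
    simp [halt.self_eq_zero, ← halt.neg x y]
  obtain ⟨e, he⟩ : ∃ e, br e (br x y) = br x y := by
    by_cases hb : b = 0
    · have ha : -a ≠ 0 := neg_ne_zero.2 fun ha => hw (by simp [hab, ha, hb])
      exact ⟨(-a)⁻¹ • y, by simp only [map_smul, LinearMap.smul_apply, hyw, smul_smul,
        inv_mul_cancel₀ ha, one_smul]⟩
    · exact ⟨b⁻¹ • x, by simp only [map_smul, LinearMap.smul_apply, hxw, smul_smul,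
        inv_mul_cancel₀ hb, one_smul]⟩
  exact ⟨e, _, linearIndependent_of_br_eq_right halt hw he, he⟩

theorem br_mul_eq_smul_of_eigen
    (hcompat : ∀ x y z, br (mul x y) z = mul (br x z) y + mul x (br y z)) {x y z : M} {a b : K}
    (hx : br x z = a • x) (hy : br y z = b • y) : br (mul x y) z = (a + b) • mul x y := by
  rw [hcompat, hx, hy, map_smul, LinearMap.smul_apply, map_smul, add_smul]

theorem exists_mul_eq_smul_of_br_eq_right (hdim : finrank K M = 2) (halt : br.IsAlt)
    (hcompat : ∀ x y z, br (mul x y) z = mul (br x z) y + mul x (br y z))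
    {e w : M} (hli : LinearIndependent K ![e, w]) (hbr : br e w = w) :
    ∃ a b : K, mul e e = a • e ∧ mul e w = b • w ∧ mul w w = 0 := by
  have hee : br e e = (0 : K) • e := by rw [halt.self_eq_zero, zero_smul]
  have hww : br w w = (0 : K) • w := by rw [halt.self_eq_zero, zero_smul]
  have hwe : br w e = (-1 : K) • w := by rw [← halt.neg, hbr, neg_one_smul]
  have hcoord : ∀ {v : M} {c : K}, br v e = c • v →
      ∃ a b : K, v = a • e + b • w ∧ c * a = 0 ∧ (c + 1) * b = 0 := by
    intro v c hv
    obtain ⟨a, b, rfl⟩ := exists_eq_smul_add_smul hdim hli v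
    refine ⟨a, b, rfl, LinearIndependent.pair_iff.1 hli _ _ ?_⟩
    simp only [map_add, map_smul, LinearMap.add_apply, LinearMap.smul_apply, hee, hwe] at hv
    linear_combination (norm := module) -hv
  obtain ⟨a, b, hmul_ee, -, hb⟩ := hcoord (br_mul_eq_smul_of_eigen hcompat hee hee)
  obtain ⟨a', b', hmul_ew, ha', -⟩ := hcoord (br_mul_eq_smul_of_eigen hcompat hee hwe)
  obtain ⟨a'', b'', hmul_ww, -, hb''⟩ := hcoord (br_mul_eq_smul_of_eigen hcompat hwe hwe)
  norm_num at hb ha' hb''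
  subst hb ha' hb''
  simp only [zero_smul, add_zero, zero_add] at hmul_ee hmul_ew hmul_ww
  refine ⟨a, b', hmul_ee, hmul_ew, ?_⟩
  have ha'' : a'' • w = 0 := by
    simpa [hmul_ww, hbr] using br_mul_eq_smul_of_eigen (mul := mul) hcompat hww hww
  rw [hmul_ww, (smul_eq_zero.1 ha'').resolve_right (hli.ne_zero 1), zero_smul]

theorem mul_eq_zero_of_br_eq_right (hdim : finrank K M = 2)
    (hcomm : ∀ x y, mul x y = mul y x) (hassoc : ∀ x y z, mul (mul x y) z = mul x (mul y z))
    (halt : br.IsAlt) (hcompat : ∀ x y z, br (mul x y) z = mul (br x z) y + mul x (br y z))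
    {e w : M} (hli : LinearIndependent K ![e, w]) (hbr : br e w = w) (x y : M) :
    mul x y = 0 := by
  obtain ⟨a, b, hmul_ee, hmul_ew, hmul_ww⟩ :=
    exists_mul_eq_smul_of_br_eq_right hdim halt hcompat hli hbr
  have hw : w ≠ 0 := hli.ne_zero 1
  have hab : (a - 2 * b) • w = 0 := by
    have h := hcompat e e w
    rw [hbr, hcomm w e, hmul_ee, hmul_ew, map_smul, LinearMap.smul_apply, hbr] at h
    linear_combination (norm := module) h
  have hassoc_eew : (a * b - b * b) • w = 0 := by
    have h := hassoc e e w
    simp only [hmul_ee, hmul_ew, map_smul, LinearMap.smul_apply, smul_smul] at h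
    linear_combination (norm := module) h
  rw [smul_eq_zero_iff_left hw] at hab hassoc_eew
  have ha : a = 2 * b := sub_eq_zero.1 hab
  have hb : b = 0 := by
    rw [ha] at hassoc_eew
    exact pow_eq_zero_iff two_ne_zero |>.1 (by linear_combination hassoc_eew)
  obtain ⟨s, t, rfl⟩ := exists_eq_smul_add_smul hdim hli x
  obtain ⟨s', t', rfl⟩ := exists_eq_smul_add_smul hdim hli y
  simp [hmul_ee, hmul_ew, hmul_ww, hcomm w e, ha, hb]

end General

section Tables

variable {G : Type*} [AddCommGroup G] [Module ℂ G] {mul : G →ₗ[ℂ] G →ₗ[ℂ] G}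

def HasMulTable (f : G →ₗ[ℂ] G →ₗ[ℂ] G) (c : Fin 2 → Fin 2 → V2) : Prop :=
  ∃ b : Basis (Fin 2) ℂ G, ∀ i j, b.equivFun (f (b i) (b j)) = c i j

theorem Module.Basis.equivFun_apply₂_eq_tm (b : Basis (Fin 2) ℂ G) {f : G →ₗ[ℂ] G →ₗ[ℂ] G}
    {c : Fin 2 → Fin 2 → V2} (hc : ∀ i j, b.equivFun (f (b i) (b j)) = c i j) (x y : G) :
    b.equivFun (f x y) = tm c (b.equivFun x) (b.equivFun y) := by
  calc b.equivFun (f x y)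
      = b.equivFun (f (∑ i, b.equivFun x i • b i) (∑ j, b.equivFun y j • b j)) := by
        rw [b.sum_equivFun, b.sum_equivFun]
    _ = tm c (b.equivFun x) (b.equivFun y) := by
        simp only [map_sum, map_smul, LinearMap.sum_apply, LinearMap.smul_apply, hc,
          Finset.smul_sum, smul_smul, tm]
        rw [Finset.sum_comm]
        simp only [mul_comm]

theorem HasMulTable.of_linearIndependent (hdim : finrank ℂ G = 2) {f : G →ₗ[ℂ] G →ₗ[ℂ] G}
    {x y : G} (hxy : LinearIndependent ℂ ![x, y]) {c : Fin 2 → Fin 2 → V2}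
    (hc : ∀ i j, f (![x, y] i) (![x, y] j) = ∑ k, c i j k • ![x, y] k) : HasMulTable f c := by
  let b := basisOfLinearIndependentOfCardEqFinrank hxy (by simp [hdim])
  have hb : ⇑b = ![x, y] := coe_basisOfLinearIndependentOfCardEqFinrank hxy _
  refine ⟨b, fun i j => ?_⟩
  rw [hb, hc, ← hb, ← b.equivFun_symm_apply, LinearEquiv.apply_symm_apply]

theorem HasMulTable.iso2_tm_zm {br : G →ₗ[ℂ] G →ₗ[ℂ] G} {c : Fin 2 → Fin 2 → V2}
    (hmul : HasMulTable mul c) (hbr : ∀ x y, br x y = 0) :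
    Iso2 (fun x y => mul x y) (fun x y => br x y) (tm c) zm := by
  obtain ⟨b, hb⟩ := hmul
  exact ⟨b.equivFun, b.equivFun_apply₂_eq_tm hb, fun x y => by simp [hbr, zm]⟩

theorem HasMulTable.iso2_zm_tm {br : G →ₗ[ℂ] G →ₗ[ℂ] G} {c : Fin 2 → Fin 2 → V2}
    (hmul : ∀ x y, mul x y = 0) (hbr : HasMulTable br c) :
    Iso2 (fun x y => mul x y) (fun x y => br x y) zm (tm c) := by
  obtain ⟨b, hb⟩ := hbr
  exact ⟨b.equivFun, fun x y => by simp [hmul, zm], b.equivFun_apply₂_eq_tm hb⟩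

theorem hasMulTable_cA01 (hdim : finrank ℂ G = 2) (hcomm : ∀ x y, mul x y = mul y x)
    {e f : G} (hli : LinearIndependent ℂ ![e, f]) (he : mul e e = e) (hef : mul e f = 0)
    (hf : mul f f = f) : HasMulTable mul cA01 :=
  .of_linearIndependent hdim hli <| by
    simp [Fin.forall_fin_two, Fin.sum_univ_two, cA01, tbl, he, hef, hf, hcomm f e]

theorem hasMulTable_cA02 (hdim : finrank ℂ G = 2) (hcomm : ∀ x y, mul x y = mul y x)
    {e f : G} (hli : LinearIndependent ℂ ![e, f]) (he : mul e e = e) (hef : mul e f = f)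
    (hf : mul f f = 0) : HasMulTable mul cA02 :=
  .of_linearIndependent hdim hli <| by
    simp [Fin.forall_fin_two, Fin.sum_univ_two, cA02, tbl, he, hef, hf, hcomm f e]

theorem hasMulTable_cA03 (hdim : finrank ℂ G = 2) (hcomm : ∀ x y, mul x y = mul y x)
    {e f : G} (hli : LinearIndependent ℂ ![e, f]) (he : mul e e = e) (hef : mul e f = 0)
    (hf : mul f f = 0) : HasMulTable mul cA03 :=
  .of_linearIndependent hdim hli <| by
    simp [Fin.forall_fin_two, Fin.sum_univ_two, cA03, tbl, he, hef, hf, hcomm f e]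

theorem hasMulTable_cA04 (hdim : finrank ℂ G = 2) (hcomm : ∀ x y, mul x y = mul y x)
    (hassoc : ∀ x y z, mul (mul x y) z = mul x (mul y z)) {x : G}
    (hli : LinearIndependent ℂ ![x, mul x x]) (hx : mul x (mul x x) = 0) :
    HasMulTable mul cA04 :=
  .of_linearIndependent hdim hli <| by
    simp [Fin.forall_fin_two, Fin.sum_univ_two, cA04, tbl, hx, hcomm (mul x x) x, hassoc]

theorem hasMulTable_of_mul_eq_zero (hdim : finrank ℂ G = 2)
    (hcomm : ∀ x y, mul x y = mul y x) (hassoc : ∀ x y z, mul (mul x y) z = mul x (mul y z))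
    {e y : G} (hli : LinearIndependent ℂ ![e, y]) (hee : mul e e = e) (hey : mul e y = 0) :
    HasMulTable mul cA01 ∨ HasMulTable mul cA03 := by
  obtain ⟨a, b, hyy⟩ := exists_eq_smul_add_smul hdim hli (mul y y)
  have ha : a = 0 := by
    have h := hassoc e y y
    simp only [hey, map_zero, LinearMap.zero_apply, hyy, map_add, map_smul, hee,
      smul_zero, add_zero] at h
    exact (smul_eq_zero.1 h.symm).resolve_right (hli.ne_zero 0)
  rw [ha, zero_smul, zero_add] at hyy
  by_cases hb : b = 0
  · exact Or.inr (hasMulTable_cA03 hdim hcomm hli hee hey (by simp [hyy, hb]))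
  · refine Or.inl (hasMulTable_cA01 hdim hcomm (f := b⁻¹ • y) ?_ hee (by simp [hey]) ?_)
    · exact hli.pair_smul_right (inv_ne_zero hb)
    · simp [hyy, smul_smul, hb]

theorem hasMulTable_of_mul_eq_self (hdim : finrank ℂ G = 2)
    (hcomm : ∀ x y, mul x y = mul y x) {e y : G} (hli : LinearIndependent ℂ ![e, y])
    (hee : mul e e = e) (hey : mul e y = y) :
    HasMulTable mul cA01 ∨ HasMulTable mul cA02 := by
  obtain ⟨z, ρ, hli, hez, hzz⟩ :=
    exists_linearIndependent_mul_self_eq_smul hdim hcomm hli hee hey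
  by_cases hρ : ρ = 0
  · exact Or.inr (hasMulTable_cA02 hdim hcomm hli hee hez (by simp [hzz, hρ]))
  obtain ⟨σ, hσ⟩ := IsAlgClosed.exists_pow_nat_eq ρ two_pos
  have hσ0 : σ ≠ 0 := by rintro rfl; simp [eq_comm, hρ] at hσ
  set u := σ⁻¹ • z
  have heu : mul e u = u := by simp [u, hez]
  have huu : mul u u = e := by
    have hσσ : σ⁻¹ * (σ⁻¹ * ρ) = 1 := by rw [← hσ]; field_simp
    simp [u, hzz, smul_smul, hσσ]
  -- `e ± u` are twice two orthogonal idempotents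
  refine Or.inl (hasMulTable_cA01 hdim hcomm (e := (2⁻¹ : ℂ) • e + (2⁻¹ : ℂ) • u)
    (f := (2⁻¹ : ℂ) • e + (-2⁻¹ : ℂ) • u) ?_ ?_ ?_ ?_)
  · exact (LinearIndependent.pair_add_smul_add_smul_iff _ _ _ _).2
      ⟨hli.pair_smul_right (inv_ne_zero hσ0), by norm_num⟩
  all_goals
    simp only [map_add, map_smul, LinearMap.add_apply, LinearMap.smul_apply, hee, heu, huu,
      hcomm u e]
    module

theorem hasMulTable_of_idempotent (hdim : finrank ℂ G = 2)
    (hcomm : ∀ x y, mul x y = mul y x) (hassoc : ∀ x y z, mul (mul x y) z = mul x (mul y z))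
    {e : G} (he : e ≠ 0) (hee : mul e e = e) :
    HasMulTable mul cA01 ∨ HasMulTable mul cA02 ∨ HasMulTable mul cA03 := by
  obtain ⟨y, hli, hey | hey⟩ :=
    exists_linearIndependent_mul_eq_self_or_eq_zero hdim hassoc he hee
  · rcases hasMulTable_of_mul_eq_self hdim hcomm hli hee hey with h | h <;>
      simp only [h, true_or, or_true]
  · rcases hasMulTable_of_mul_eq_zero hdim hcomm hassoc hli hee hey with h | h <;>
      simp only [h, true_or, or_true]

theorem hasMulTable_of_commAssoc (hdim : finrank ℂ G = 2)
    (hcomm : ∀ x y, mul x y = mul y x) (hassoc : ∀ x y z, mul (mul x y) z = mul x (mul y z))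
    (h : ∃ x y, mul x y ≠ 0) :
    HasMulTable mul cA01 ∨ HasMulTable mul cA02 ∨ HasMulTable mul cA03 ∨
      HasMulTable mul cA04 := by
  obtain ⟨x, hx⟩ := exists_mul_self_ne_zero hcomm h
  rcases exists_idempotent_or_mul_cube_eq_zero hdim hassoc hx with ⟨e, he, hee⟩ | ⟨hli, hx3⟩
  · rcases hasMulTable_of_idempotent hdim hcomm hassoc he hee with h | h | h <;>
      simp only [h, true_or, or_true]
  · exact Or.inr (Or.inr (Or.inr (hasMulTable_cA04 hdim hcomm hassoc hli hx3)))

theorem hasMulTable_of_br_eq_right (hdim : finrank ℂ G = 2)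
    {br : G →ₗ[ℂ] G →ₗ[ℂ] G} (halt : br.IsAlt) {e w : G}
    (hli : LinearIndependent ℂ ![e, w]) (hbr : br e w = w) :
    HasMulTable br (tbl 0 ![0, 1] ![0, -1] 0) :=
  .of_linearIndependent hdim hli <| by
    simp [Fin.forall_fin_two, Fin.sum_univ_two, tbl, halt.self_eq_zero, hbr, ← halt.neg e w]

end Tables

/-- Every nonzero 2-dimensional generic Poisson algebra over ℂ is
isomorphic to one of A01, A02, A03, A04 (with `[−,−] ≡ 0`) or to the algebra with
`· ≡ 0` and `[e1,e2] = e2 = -[e2,e1]`. -/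
theorem statement6 (G : Type*) [AddCommGroup G] [Module ℂ G]
    (hdim : Module.finrank ℂ G = 2)
    (mul br : G →ₗ[ℂ] G →ₗ[ℂ] G)
    (hcomm : ∀ x y : G, mul x y = mul y x)
    (hassoc : ∀ x y z : G, mul (mul x y) z = mul x (mul y z))
    (hanti : ∀ x y : G, br x y = - br y x)
    (hcompat : ∀ x y z : G, br (mul x y) z = mul (br x z) y + mul x (br y z))
    (hnz : (∃ x y : G, mul x y ≠ 0) ∨ (∃ x y : G, br x y ≠ 0)) :
    Iso2 (fun x y => mul x y) (fun x y => br x y) (tm cA01) zm ∨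
    Iso2 (fun x y => mul x y) (fun x y => br x y) (tm cA02) zm ∨
    Iso2 (fun x y => mul x y) (fun x y => br x y) (tm cA03) zm ∨
    Iso2 (fun x y => mul x y) (fun x y => br x y) (tm cA04) zm ∨
    Iso2 (fun x y => mul x y) (fun x y => br x y) zm (tm (tbl 0 ![0,1] ![0,-1] 0)) := by
  have halt : br.IsAlt := fun x => by
    have h : (2 : ℂ) • br x x = 0 := by
      rw [two_smul]; nth_rewrite 1 [hanti]; exact neg_add_cancel _
    exact (smul_eq_zero.1 h).resolve_left two_ne_zero
  by_cases hbr : ∃ x y, br x y ≠ 0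
  · obtain ⟨e, w, hli, hew⟩ := exists_linearIndependent_br_eq_right hdim halt hbr
    refine Or.inr (Or.inr (Or.inr (Or.inr (HasMulTable.iso2_zm_tm ?_ ?_))))
    · exact mul_eq_zero_of_br_eq_right hdim hcomm hassoc halt hcompat hli hew
    · exact hasMulTable_of_br_eq_right hdim halt hli hew
  · push Not at hbr
    have hmul := hnz.resolve_right (by simpa using hbr)
    rcases hasMulTable_of_commAssoc hdim hcomm hassoc hmul with h | h | h | h <;>
      simp only [h.iso2_tm_zm hbr, true_or, or_true]
end
end

section
/- Every nonzero 2-dimensional Zinbiel algebra over ℂ is isomorphic to the algebra with basis e1, e2 and multiplication e1·e1 = e2, all other products of basis elements being zero. -/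
noncomputable section

/-! In a Zinbiel algebra `x·(y·z) = (x∘y)·z` with `x∘y = y·x + x·y`. If every square vanished,
`∘` would vanish, so `A·(A·A) = 0` and `x·y ≠ 0` would make `x, y, x·y` linearly independent,
impossible in dimension 2. Hence some `e·e = u` is nonzero, and `e, u` form a basis. Writing
`v = u·e`, the identities at `(e,e,e)`, `(u,e,e)` and `(e,e,u)` give `e·u = 2v`, `u·u = 3 v·e` and
`e·v = 3 v·e`; expanding `v = αe + βu` in the last one forces `αβ = 0 = β² + 2α`, so `v = 0`, and
then `e·e = u` is the only nonzero product of basis vectors. -/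

open Module Submodule

section Zinbiel

variable {R M : Type*} [CommRing R] [AddCommGroup M] [Module R M]

def IsZinbiel (mul : M →ₗ[R] M →ₗ[R] M) : Prop :=
  ∀ x y z, mul x (mul y z) = mul (mul y x + mul x y) z

namespace IsZinbiel

variable {mul : M →ₗ[R] M →ₗ[R] M} (h : IsZinbiel mul)
include h

theorem mul_mul_eq_zero_of_isAlt (halt : mul.IsAlt) (x y z : M) : mul x (mul y z) = 0 := by
  rw [h, ← halt.neg x y, neg_add_cancel, map_zero, LinearMap.zero_apply]

theorem mul_mul_self (e : M) : mul e (mul e e) = (2 : R) • mul (mul e e) e := by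
  rw [h, ← two_smul R, map_smul, LinearMap.smul_apply]

theorem mul_self_mul_self (e : M) :
    mul (mul e e) (mul e e) = (3 : R) • mul (mul (mul e e) e) e := by
  rw [h, h.mul_mul_self]
  simp only [map_add, map_smul, LinearMap.add_apply, LinearMap.smul_apply]
  module

end IsZinbiel

end Zinbiel

section Field

variable {K M : Type*} [Field K] [AddCommGroup M] [Module K M]

theorem span_pair_eq_top_of_finrank_eq_two (hdim : finrank K M = 2) {x y : M}
    (hind : LinearIndependent K ![x, y]) : span K {x, y} = ⊤ := by
  simpa [Matrix.range_cons, Set.range_const, Set.union_singleton, Set.pair_comm]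
    using hind.span_eq_top_of_card_eq_finrank (by simp [hdim])

namespace IsZinbiel

variable {mul : M →ₗ[K] M →ₗ[K] M} (h : IsZinbiel mul)
include h

theorem linearIndependent_mul_of_isAlt (halt : mul.IsAlt) {x y : M} (hxy : mul x y ≠ 0) :
    LinearIndependent K ![x, y, mul x y] := by
  rw [Fintype.linearIndependent_iff]
  intro g hg
  simp only [Fin.sum_univ_three, Matrix.cons_val_zero, Matrix.cons_val_one, Matrix.cons_val_two,
    Matrix.vecHead, Matrix.vecTail, Function.comp_apply, Fin.succ_zero_eq_one] at hg
  have hann : ∀ z, mul z (mul x y) = 0 := fun z => h.mul_mul_eq_zero_of_isAlt halt z x y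
  have h1 : g 1 = 0 := by
    have := congrArg (mul x) hg
    simp only [map_add, map_smul, halt x, hann, smul_zero, zero_add, add_zero, map_zero] at this
    exact (smul_eq_zero.mp this).resolve_right hxy
  have h0 : g 0 = 0 := by
    have hwy : mul (mul x y) y = 0 := by rw [← halt.neg, hann, neg_zero]
    have := congrArg (fun z => mul z y) hg
    simp only [map_add, map_smul, LinearMap.add_apply, LinearMap.smul_apply, halt y, hwy,
      smul_zero, add_zero, map_zero, LinearMap.zero_apply] at this
    exact (smul_eq_zero.mp this).resolve_right hxy
  have h2 : g 2 = 0 := by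
    simp only [h0, h1, zero_smul, zero_add] at hg
    exact (smul_eq_zero.mp hg).resolve_right hxy
  intro i
  fin_cases i <;> assumption

theorem exists_mul_self_ne_zero_of_finrank_eq_two (hdim : finrank K M = 2)
    (hnz : ∃ x y, mul x y ≠ 0) : ∃ e, mul e e ≠ 0 := by
  by_contra! halt
  obtain ⟨x, y, hxy⟩ := hnz
  have : FiniteDimensional K M := .of_finrank_pos (by omega)
  have := (h.linearIndependent_mul_of_isAlt halt hxy).fintype_card_le_finrank
  simp [hdim] at this

theorem linearIndependent_mul_self {e : M} (he : mul e e ≠ 0) :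
    LinearIndependent K ![e, mul e e] := by
  have he0 : e ≠ 0 := by rintro rfl; simp at he
  rw [LinearIndependent.pair_iff' he0]
  intro a ha
  have hl : mul e (mul e e) = a • mul e e := by conv_lhs => rw [← ha, map_smul]
  have hr : mul (mul e e) e = a • mul e e := by
    conv_lhs => rw [← ha, map_smul, LinearMap.smul_apply]
  have h2a := h.mul_mul_self e
  rw [hl, hr, smul_smul] at h2a
  have ha0 : a = 0 := by linear_combination -smul_left_injective K he h2a
  exact he (by rw [← ha, ha0, zero_smul])

variable [NeZero (2 : K)]

theorem mul_mul_self_mul (e : M) :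
    mul e (mul (mul e e) e) = (3 : K) • mul (mul (mul e e) e) e := by
  have h2 := h e e (mul e e)
  rw [h.mul_mul_self, map_smul, ← two_smul K (mul e e), map_smul, LinearMap.smul_apply,
    h.mul_self_mul_self, smul_smul] at h2
  exact smul_right_injective M two_ne_zero (h2.trans (smul_smul _ _ _).symm)

theorem mul_self_mul_eq_zero {e : M} (hind : LinearIndependent K ![e, mul e e])
    (hspan : mul (mul e e) e ∈ span K {e, mul e e}) : mul (mul e e) e = 0 := by
  obtain ⟨α, β, hv⟩ := mem_span_pair.mp hspan
  have hev : mul e (mul (mul e e) e) = α • mul e e + (2 * β) • mul (mul e e) e := by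
    conv_lhs => rw [← hv, map_add, map_smul, map_smul, h.mul_mul_self]
    module
  have hve : mul (mul (mul e e) e) e = α • mul e e + β • mul (mul e e) e := by
    conv_lhs => rw [← hv, map_add, map_smul, map_smul, LinearMap.add_apply,
      LinearMap.smul_apply, LinearMap.smul_apply]
  have key := h.mul_mul_self_mul e
  rw [hev, hve] at key
  have hcoord : (α * β) • e + (β ^ 2 + 2 * α) • mul e e = 0 := by
    linear_combination (norm := module) β • hv - key
  obtain ⟨h1, h2⟩ := LinearIndependent.pair_iff.mp hind _ _ hcoord
  have hβ : β = 0 := pow_eq_zero_iff three_ne_zero |>.mp (by linear_combination β * h2 - 2 * h1)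
  have hα : α = 0 :=
    (mul_eq_zero.mp (by linear_combination h2 - β * hβ : (2 : K) * α = 0)).resolve_left
      two_ne_zero
  rw [← hv, hα, hβ, zero_smul, zero_smul, add_zero]

end IsZinbiel

end Field

theorem iso1_tm_of_basis {A : Type*} [AddCommGroup A] [Module ℂ A] (b : Basis (Fin 2) ℂ A)
    (mul : A →ₗ[ℂ] A →ₗ[ℂ] A) (c : Fin 2 → Fin 2 → V2)
    (hc : ∀ i j, b.equivFun (mul (b i) (b j)) = c i j) :
    Iso1 (fun x y => mul x y) (tm c) := by
  refine ⟨b.equivFun, fun x y => ?_⟩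
  conv_lhs => rw [← b.sum_equivFun x, ← b.sum_equivFun y]
  simp only [map_sum, map_smul, LinearMap.sum_apply, LinearMap.smul_apply, hc, tm]
  rw [Finset.sum_comm]
  simp only [Finset.smul_sum, smul_smul, mul_comm]

/-- Every nonzero 2-dimensional Zinbiel algebra over ℂ is isomorphic
to the algebra with `e1·e1 = e2` and all other products of basis elements zero. -/
theorem statement18 (A : Type*) [AddCommGroup A] [Module ℂ A]
    (hdim : Module.finrank ℂ A = 2)
    (mul : A →ₗ[ℂ] A →ₗ[ℂ] A)
    (hzin : ∀ x y z : A, mul x (mul y z) = mul (mul y x + mul x y) z)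
    (hnz : ∃ x y : A, mul x y ≠ 0) :
    Iso1 (fun x y => mul x y) (tm (tbl ![0,1] 0 0 0)) := by
  have hzin : IsZinbiel mul := hzin
  obtain ⟨e, he⟩ := hzin.exists_mul_self_ne_zero_of_finrank_eq_two hdim hnz
  have hind := hzin.linearIndependent_mul_self he
  have hv : mul (mul e e) e = 0 :=
    hzin.mul_self_mul_eq_zero hind (by simp [span_pair_eq_top_of_finrank_eq_two hdim hind])
  obtain ⟨b, hb⟩ : ∃ b : Basis (Fin 2) ℂ A, ⇑b = ![e, mul e e] :=
    ⟨_, coe_basisOfLinearIndependentOfCardEqFinrank hind (by simp [hdim])⟩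
  have hu : b.equivFun (mul e e) = ![0, 1] := by
    simpa [hb, Pi.single, Function.update, funext_iff, Fin.forall_fin_two] using b.equivFun_self 1
  refine iso1_tm_of_basis b mul _ fun i j => ?_
  fin_cases i <;> fin_cases j <;>
    simp [hb, hu, tbl, hv, hzin.mul_mul_self, hzin.mul_self_mul_self]
end
end
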